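/- arXiv:1712.07504 — 4 statements merged into one kernel-verified Lean document; each statement's English description precedes it below -/
import Mathlib

section
/- For every k ≥ 1, the chain-of-boxes gadget B_k has exactly one matching that covers every vertex except the two endpoints v_0 and v_{2k−1} of its underlying path. -/
/-- The number of near-perfect matchings of `G` with holes exactly at `u` and `v`,
i.e. matchings covering every vertex except `u` and `v`. -/
noncomputable def npCount {V : Type*} (G : SimpleGraph V) (u v : V) : ℕ :=
  Nat.card {M : G.Subgraph // M.IsMatching ∧ M.verts = Set.univ \ {u, v}}

/-- The edge set of the chain-of-boxes gadget `B_k`, realized on the natural numbers: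
the path vertices `v_0, …, v_{2k-1}` are `0, …, 2k-1`, and for `i < k` the extra
vertices are `a_i = 2k + 2i` and `b_i = 2k + 2i + 1`. -/
def boxEdges (k : ℕ) : Set (Sym2 ℕ) :=
  {e | ∃ j, j + 2 ≤ 2 * k ∧ e = s(j, j + 1)} ∪
  {e | ∃ i, i < k ∧ e = s(2 * i, 2 * k + 2 * i)} ∪
  {e | ∃ i, i < k ∧ e = s(2 * k + 2 * i, 2 * k + 2 * i + 1)} ∪
  {e | ∃ i, i < k ∧ e = s(2 * k + 2 * i + 1, 2 * i + 1)}

/-- The chain-of-boxes gadget `B_k`, a simple graph on `4k` vertices. -/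
def chainOfBoxes (k : ℕ) : SimpleGraph {n : ℕ | n < 4 * k} :=
  (SimpleGraph.fromEdgeSet (boxEdges k)).induce {n : ℕ | n < 4 * k}

/-! Every vertex `a_i` has only the neighbours `v_{2i}` and `b_i`. Walking along the boxes,
`v_{2i}` is a hole or already matched backwards, so `a_i` is forced onto `b_i`; then `v_{2i+1}`,
having lost `v_{2i}` and `b_i`, is forced onto `v_{2i+2}`. So the matching is determined, and the
edges `a_i b_i`, `v_{2i+1} v_{2i+2}` do form one. -/

theorem SimpleGraph.Subgraph.IsMatching.eq_of_le {V : Type*} {G : SimpleGraph V}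
    {M N : G.Subgraph} (hM : M.IsMatching) (hN : N.IsMatching) (hle : N ≤ M)
    (hverts : M.verts ⊆ N.verts) : N = M := by
  refine le_antisymm hle ⟨hverts, fun v w hvw => ?_⟩
  obtain ⟨u, hvu, -⟩ := hN (hverts (M.edge_vert hvw))
  rwa [hM.eq_of_adj_left hvw (hle.2 hvu)]

namespace ChainOfBoxes

/-- The second and third disjuncts, `x ↔ x + 2k`, are the sides `v_{2i} a_i` and
`b_i v_{2i+1}` of the boxes; the last two are the tops `a_i b_i`. -/
def EdgeRel (k x y : ℕ) : Prop :=
  (x < 2 * k ∧ y < 2 * k ∧ (y = x + 1 ∨ x = y + 1)) ∨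
  (x < 2 * k ∧ y = x + 2 * k) ∨ (y < 2 * k ∧ x = y + 2 * k) ∨
  (2 * k ≤ x ∧ x < 4 * k ∧ x % 2 = 0 ∧ y = x + 1) ∨
  (2 * k ≤ y ∧ y < 4 * k ∧ y % 2 = 0 ∧ x = y + 1)

theorem mem_boxEdges_iff (k x y : ℕ) : s(x, y) ∈ boxEdges k ↔ EdgeRel k x y := by
  simp only [boxEdges, EdgeRel, Set.mem_union, Set.mem_ofPred_eq, Sym2.eq_iff]
  constructor
  · rintro (((⟨j, hj, h | h⟩ | ⟨i, hi, h | h⟩) | ⟨i, hi, h | h⟩) | ⟨i, hi, h | h⟩) <;> omega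
  · rintro (⟨hx, hy, h | h⟩ | ⟨hx, h⟩ | ⟨hy, h⟩ | ⟨hx, hx', hx'', h⟩ | ⟨hy, hy', hy'', h⟩)
    · exact Or.inl (Or.inl (Or.inl ⟨x, by omega, by omega⟩))
    · exact Or.inl (Or.inl (Or.inl ⟨y, by omega, by omega⟩))
    · rcases Nat.even_or_odd' x with ⟨i, rfl | rfl⟩
      · exact Or.inl (Or.inl (Or.inr ⟨i, by omega, by omega⟩))
      · exact Or.inr ⟨i, by omega, by omega⟩
    · rcases Nat.even_or_odd' y with ⟨i, rfl | rfl⟩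
      · exact Or.inl (Or.inl (Or.inr ⟨i, by omega, by omega⟩))
      · exact Or.inr ⟨i, by omega, by omega⟩
    · exact Or.inl (Or.inr ⟨(x - 2 * k) / 2, by omega, by omega⟩)
    · exact Or.inl (Or.inr ⟨(y - 2 * k) / 2, by omega, by omega⟩)

theorem chainOfBoxes_adj_iff {k : ℕ} (a b : {n : ℕ | n < 4 * k}) :
    (chainOfBoxes k).Adj a b ↔ EdgeRel k a b := by
  change (SimpleGraph.fromEdgeSet (boxEdges k)).Adj a b ↔ _
  rw [SimpleGraph.fromEdgeSet_adj, mem_boxEdges_iff]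
  exact ⟨And.left, fun h => ⟨h, by unfold EdgeRel at h; omega⟩⟩

/-- `x` is matched to `x + 1`: it is some `a_i`, or some `v_{2i+1}` other than `v_{2k-1}`. -/
def MatchedUp (k x : ℕ) : Prop :=
  (2 * k ≤ x ∧ x % 2 = 0) ∨ (x % 2 = 1 ∧ x + 1 < 2 * k)

def MatchRel (k x y : ℕ) : Prop :=
  (MatchedUp k x ∧ y = x + 1) ∨ (MatchedUp k y ∧ x = y + 1)

theorem MatchRel.symm {k x y : ℕ} (h : MatchRel k x y) : MatchRel k y x :=
  Or.symm h

theorem MatchRel.lt {k x y : ℕ} (h : MatchRel k x y) (hx : x < 4 * k) : y < 4 * k := by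
  unfold MatchRel MatchedUp at h; omega

theorem MatchRel.edgeRel {k x y : ℕ} (h : MatchRel k x y) (hx : x < 4 * k) (hy : y < 4 * k) :
    EdgeRel k x y := by
  unfold MatchRel MatchedUp at h; unfold EdgeRel; omega

theorem existsUnique_matchRel {k x : ℕ} (hx : x < 4 * k) (h0 : x ≠ 0) (h1 : x ≠ 2 * k - 1) :
    ∃! y, MatchRel k x y := by
  classical
  refine ⟨if MatchedUp k x then x + 1 else x - 1, ?_, fun y hy => ?_⟩ <;>
    unfold MatchRel MatchedUp at * <;> split_ifs <;> omega

def matching (k : ℕ) : (chainOfBoxes k).Subgraph where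
  verts := {v | v.1 ≠ 0 ∧ v.1 ≠ 2 * k - 1}
  Adj a b := MatchRel k a b
  adj_sub {a b} h := (chainOfBoxes_adj_iff a b).2 (h.edgeRel a.2 b.2)
  edge_vert {a b} h := by
    have ha : a.1 < 4 * k := a.2
    unfold MatchRel MatchedUp at h; exact ⟨by omega, by omega⟩
  symm := ⟨fun _ _ => MatchRel.symm⟩

theorem matching_isMatching (k : ℕ) : (matching k).IsMatching := by
  rintro v ⟨h0, h1⟩
  obtain ⟨y, hy, huniq⟩ := existsUnique_matchRel v.2 h0 h1
  exact ⟨⟨y, hy.lt v.2⟩, hy, fun w hw => Subtype.ext (huniq w hw)⟩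

section Forced

variable {k : ℕ} {M : (chainOfBoxes k).Subgraph}

/-- `M.Adj` on vertex labels, so that the forcing argument can be run in `ℕ`. -/
def LabelAdj (M : (chainOfBoxes k).Subgraph) (x y : ℕ) : Prop :=
  ∃ (hx : x < 4 * k) (hy : y < 4 * k), M.Adj ⟨x, hx⟩ ⟨y, hy⟩

theorem labelAdj_iff {a b : {n : ℕ | n < 4 * k}} : LabelAdj M a b ↔ M.Adj a b :=
  ⟨fun ⟨_, _, h⟩ => h, fun h => ⟨a.2, b.2, h⟩⟩

theorem LabelAdj.symm {x y : ℕ} (h : LabelAdj M x y) : LabelAdj M y x :=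
  let ⟨hx, hy, hxy⟩ := h; ⟨hy, hx, hxy.symm⟩

theorem LabelAdj.edgeRel {x y : ℕ} (h : LabelAdj M x y) : EdgeRel k x y :=
  let ⟨_, _, hxy⟩ := h; (chainOfBoxes_adj_iff _ _).1 (M.adj_sub hxy)

theorem LabelAdj.unique (hM : M.IsMatching) {x y z : ℕ} (hy : LabelAdj M x y)
    (hz : LabelAdj M x z) : y = z :=
  let ⟨_, _, hxy⟩ := hy; let ⟨_, _, hxz⟩ := hz
  congrArg Subtype.val (hM.eq_of_adj_left hxy hxz)

variable (hM : M.IsMatching) (hV : M.verts = (matching k).verts)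
include hM hV

theorem exists_labelAdj {x : ℕ} (hx : x < 4 * k) (h0 : x ≠ 0) (h1 : x ≠ 2 * k - 1) :
    ∃ y, LabelAdj M x y := by
  obtain ⟨w, hw, -⟩ := hM (hV ▸ ⟨h0, h1⟩ : (⟨x, hx⟩ : {n : ℕ | n < 4 * k}) ∈ M.verts)
  exact ⟨w, hx, w.2, hw⟩

omit hM in
theorem LabelAdj.ne_zero {x y : ℕ} (h : LabelAdj M x y) : x ≠ 0 :=
  let ⟨_, _, hxy⟩ := h; (hV ▸ M.edge_vert hxy : _ ∈ (matching k).verts).1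

theorem labelAdj_box_of_forall_lt {i : ℕ} (hi : i < k)
    (hback : ∀ y, LabelAdj M (2 * i) y → y < 2 * i) :
    LabelAdj M (2 * k + 2 * i) (2 * k + 2 * i + 1) ∧
      (2 * i + 2 < 2 * k → LabelAdj M (2 * i + 1) (2 * i + 2)) := by
  have htop : LabelAdj M (2 * k + 2 * i) (2 * k + 2 * i + 1) := by
    obtain ⟨y, hy⟩ := exists_labelAdj hM hV (x := 2 * k + 2 * i) (by omega) (by omega) (by omega)
    have hy' := hy.edgeRel
    obtain rfl | rfl : y = 2 * i ∨ y = 2 * k + 2 * i + 1 := by unfold EdgeRel at hy'; omega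
    · have := hback _ hy.symm; omega
    · exact hy
  refine ⟨htop, fun hlast => ?_⟩
  obtain ⟨y, hy⟩ := exists_labelAdj hM hV (x := 2 * i + 1) (by omega) (by omega) (by omega)
  have hy' := hy.edgeRel
  obtain rfl | rfl | rfl : y = 2 * i ∨ y = 2 * i + 2 ∨ y = 2 * k + 2 * i + 1 := by
    unfold EdgeRel at hy'; omega
  · have := hback _ hy.symm; omega
  · exact hy
  · have := htop.symm.unique hM hy.symm; omega

theorem labelAdj_box {i : ℕ} (hi : i < k) :
    LabelAdj M (2 * k + 2 * i) (2 * k + 2 * i + 1) ∧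
      (2 * i + 2 < 2 * k → LabelAdj M (2 * i + 1) (2 * i + 2)) := by
  induction i with
  | zero => exact labelAdj_box_of_forall_lt hM hV hi fun y hy => absurd rfl (hy.ne_zero hV)
  | succ n ih =>
    refine labelAdj_box_of_forall_lt hM hV hi fun y hy => ?_
    have hprev := (ih (by omega)).2 (by omega)
    have := hprev.symm.unique hM hy
    omega

theorem labelAdj_of_matchedUp {x : ℕ} (hx : x < 4 * k) (h : MatchedUp k x) :
    LabelAdj M x (x + 1) := by
  rcases h with ⟨hk, heven⟩ | ⟨hodd, hlt⟩
  · obtain ⟨i, rfl⟩ : ∃ i, x = 2 * k + 2 * i := ⟨(x - 2 * k) / 2, by omega⟩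
    exact (labelAdj_box hM hV (by omega)).1
  · obtain ⟨i, rfl⟩ : ∃ i, x = 2 * i + 1 := ⟨x / 2, by omega⟩
    exact (labelAdj_box hM hV (by omega)).2 hlt

theorem matching_le : matching k ≤ M := by
  refine ⟨hV.ge, fun a b hab => labelAdj_iff.1 ?_⟩
  rcases hab with ⟨hup, hb⟩ | ⟨hup, ha⟩
  · rw [hb]; exact labelAdj_of_matchedUp hM hV a.2 hup
  · rw [ha]; exact (labelAdj_of_matchedUp hM hV b.2 hup).symm

theorem eq_matching : M = matching k :=
  (hM.eq_of_le (matching_isMatching k) (matching_le hM hV) hV.le).symm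

end Forced

theorem compl_holes_eq_matching_verts {k : ℕ} (h0 : 0 < 4 * k) (h1 : 2 * k - 1 < 4 * k) :
    Set.univ \ {⟨0, h0⟩, ⟨2 * k - 1, h1⟩} = (matching k).verts := by
  ext v
  simp [matching, Subtype.ext_iff]

end ChainOfBoxes

/-- For every `k ≥ 1`, the chain-of-boxes gadget `B_k` has exactly one matching
covering every vertex except the two path endpoints `v_0` and `v_{2k-1}`. -/
theorem chainOfBoxes_npCount (k : ℕ) (hk : 1 ≤ k) :
    npCount (chainOfBoxes k)
      ⟨0, by show (0 : ℕ) < 4 * k; omega⟩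
      ⟨2 * k - 1, by show 2 * k - 1 < 4 * k; omega⟩ = 1 := by
  rw [npCount, Nat.card_eq_one_iff_unique, ChainOfBoxes.compl_holes_eq_matching_verts]
  refine ⟨⟨fun ⟨M, hM, hMv⟩ ⟨N, hN, hNv⟩ => Subtype.ext ?_⟩,
    ⟨⟨ChainOfBoxes.matching k, ChainOfBoxes.matching_isMatching k, rfl⟩⟩⟩
  exact (ChainOfBoxes.eq_matching hM hMv).trans (ChainOfBoxes.eq_matching hN hNv).symm
end

section
/- For every k ≥ 1, the torpid-mixing gadget H_k has 16k + 4 vertices and exactly 2 perfect matchings. -/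
/-- The number of perfect matchings of a graph, counted as the number of
subgraphs that are perfect matchings. -/
noncomputable def pmCount {V : Type*} (G : SimpleGraph V) : ℕ :=
  Nat.card {M : G.Subgraph // M.IsPerfectMatching}

/-- Relabelling of the vertices of a chain-of-boxes copy: the path endpoint
`v_0` (index `0`) is sent to `e0`, the path endpoint `v_{2k-1}` (index `2k-1`)
is sent to `e1`, and every other vertex `n` is sent to `base + n`. -/
def relabelBox (k e0 e1 base : ℕ) (n : ℕ) : ℕ :=
  if n = 0 then e0 else if n = 2 * k - 1 then e1 else base + n

/-- Edge set of the torpid-mixing gadget `H_k`, realized on ℕ.  The 12-cycle is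
`a = 0, x₁ = 1, w₁ = 2, u = 3, w₂ = 4, x₂ = 5, b = 6, y₂ = 7, z₂ = 8, v = 9,
z₁ = 10, y₁ = 11` (in cyclic order), together with the chord `{a, b}` and four
disjoint copies of the chain-of-boxes gadget `B_k` whose path endpoints
`(v_0, v_{2k-1})` are identified with `(w₁, a)`, `(a, z₁)`, `(w₂, b)`, `(b, z₂)`
respectively; the internal vertices of the `j`-th copy are relabelled into the
range starting at `12 + 4kj`. -/
def gadgetEdges (k : ℕ) : Set (Sym2 ℕ) :=
  {e | ∃ i, i < 12 ∧ e = s(i, (i + 1) % 12)} ∪ {s(0, 6)} ∪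
  Sym2.map (relabelBox k 2 0 12) '' boxEdges k ∪
  Sym2.map (relabelBox k 0 10 (12 + 4 * k)) '' boxEdges k ∪
  Sym2.map (relabelBox k 4 6 (12 + 8 * k)) '' boxEdges k ∪
  Sym2.map (relabelBox k 6 8 (12 + 12 * k)) '' boxEdges k

/-- Vertex set of the torpid-mixing gadget `H_k`: the 12 cycle vertices together
with the internal (non-endpoint) vertices of the four chain-of-boxes copies. -/
def gadgetVerts (k : ℕ) : Set ℕ :=
  {n | n < 12} ∪
  {m | ∃ j, j < 4 ∧ ∃ n, 0 < n ∧ n < 4 * k ∧ n ≠ 2 * k - 1 ∧ m = 12 + 4 * k * j + n}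

/-- The torpid-mixing gadget `H_k`. -/
def gadgetGraph (k : ℕ) : SimpleGraph (gadgetVerts k) :=
  (SimpleGraph.fromEdgeSet (gadgetEdges k)).induce (gadgetVerts k)


/-!
The odd vertices `x₁, u, x₂, y₂, v, y₁` (`1, 3, …, 11`) of the 12-cycle have no neighbours
off the cycle, so a perfect matching pairs them with the even cycle vertices; and if one odd vertex
is matched forwards along the cycle, so is the next one. Hence the cycle is matched in one of its
two alternating ways, and in particular every copy of `B_k` has both path endpoints matched on the
cycle. Matching the interior of a copy from `v_0` inwards then forces the edges `a_i b_i` and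
`v_{2i+1} v_{2i+2}`, so each choice on the cycle extends in exactly one way.
-/

namespace SimpleGraph

variable {α : Type*} {G : SimpleGraph α} {s : Set α} {μ ν : α → α}

/-- A perfect matching of `G.induce s`, given by its partner function. -/
structure IsPairing (G : SimpleGraph α) (s : Set α) (μ : α → α) : Prop where
  mapsTo : Set.MapsTo μ s s
  apply_apply : ∀ a ∈ s, μ (μ a) = a
  adj : ∀ a ∈ s, G.Adj a (μ a)

namespace IsPairing

def toSubgraph (h : G.IsPairing s μ) : (G.induce s).Subgraph where
  verts := Set.univ
  Adj u v := μ u = v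
  adj_sub {u v} (huv : μ u = v) := show G.Adj u v from huv ▸ h.adj u u.2
  edge_vert _ := Set.mem_univ _
  symm := ⟨fun u v (huv : μ u = v) => show μ v = u by rw [← huv, h.apply_apply u u.2]⟩

theorem isPerfectMatching (h : G.IsPairing s μ) : h.toSubgraph.IsPerfectMatching :=
  Subgraph.isPerfectMatching_iff.2 fun u =>
    ⟨⟨μ u, h.mapsTo u.2⟩, rfl, fun _ (hv : μ u = _) => Subtype.ext hv.symm⟩

theorem toSubgraph_eq_iff (h : G.IsPairing s μ) (h' : G.IsPairing s ν) :
    h.toSubgraph = h'.toSubgraph ↔ Set.EqOn μ ν s := by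
  constructor
  · intro heq a ha
    have hadj : h.toSubgraph.Adj ⟨a, ha⟩ ⟨μ a, h.mapsTo ha⟩ := rfl
    rw [heq] at hadj
    exact (show ν a = μ a from hadj).symm
  · intro heq
    refine Subgraph.ext rfl (funext₂ fun u v => propext ?_)
    change μ u = v ↔ ν u = v
    rw [heq u.2]

end IsPairing

theorem Subgraph.IsPerfectMatching.exists_isPairing {M : (G.induce s).Subgraph}
    (hM : M.IsPerfectMatching) : ∃ μ, ∃ h : G.IsPairing s μ, h.toSubgraph = M := by
  classical
  choose p hp using Subgraph.isPerfectMatching_iff.1 hM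
  let μ a := if ha : a ∈ s then (p ⟨a, ha⟩ : α) else a
  have hμ (u : s) : μ u = p u := dif_pos u.2
  have hpp (u : s) : p (p u) = u := ((hp (p u)).2 u (hp u).1.symm).symm
  refine ⟨μ, ⟨fun a ha => ?_, fun a ha => ?_, fun a ha => ?_⟩, ?_⟩
  · rw [hμ ⟨a, ha⟩]
    exact (p _).2
  · rw [hμ ⟨a, ha⟩, hμ, hpp]
  · rw [hμ ⟨a, ha⟩]
    exact M.adj_sub (hp ⟨a, ha⟩).1
  · refine Subgraph.ext (Set.eq_univ_of_forall hM.2).symm (funext₂ fun u v => propext ?_)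
    change μ u = v ↔ M.Adj u v
    rw [hμ]
    exact ⟨fun huv => Subtype.ext huv ▸ (hp u).1, fun huv => congrArg _ ((hp u).2 v huv).symm⟩

end SimpleGraph

def boxInterior (k : ℕ) : Finset ℕ := (Finset.Ioo 0 (4 * k)).erase (2 * k - 1)

variable {k m n u v x y : ℕ}

@[simp]
theorem mem_boxInterior : n ∈ boxInterior k ↔ 0 < n ∧ n < 4 * k ∧ n ≠ 2 * k - 1 := by
  simp only [boxInterior, Finset.mem_erase, Finset.mem_Ioo]
  tauto

theorem card_boxInterior (hk : 1 ≤ k) : (boxInterior k).card = 4 * k - 2 := by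
  rw [boxInterior, Finset.card_erase_of_mem (by simp only [Finset.mem_Ioo]; omega),
    Nat.card_Ioo]
  omega

/-- In the numbering of `boxEdges`, `B_k` is the path `0, …, 2k-1`, the rungs `x — x + 2k`
for `x < 2k`, and the edges `a_i b_i = {2k + 2i, 2k + 2i + 1}`. -/
def BoxAdj (k x y : ℕ) : Prop :=
  (y = x + 1 ∧ y < 2 * k) ∨ (x < 2 * k ∧ y = x + 2 * k) ∨
    (2 * k ≤ x ∧ x % 2 = 0 ∧ y = x + 1 ∧ y < 4 * k)

theorem boxAdj_of_mem_boxEdges (h : s(x, y) ∈ boxEdges k) : BoxAdj k x y ∨ BoxAdj k y x := by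
  simp only [boxEdges, Set.mem_union, Set.mem_ofPred_eq, Sym2.eq_iff] at h
  unfold BoxAdj
  rcases h with ((⟨i, hi, h⟩ | ⟨i, hi, h⟩) | ⟨i, hi, h⟩) | ⟨i, hi, h⟩ <;>
    rcases h with ⟨rfl, rfl⟩ | ⟨rfl, rfl⟩ <;>
    first | exact Or.inl (by omega) | exact Or.inr (by omega)

theorem lt_of_mem_boxEdges (h : s(x, y) ∈ boxEdges k) : x < 4 * k := by
  have := boxAdj_of_mem_boxEdges h
  unfold BoxAdj at this
  omega

/-- The partner of an interior vertex in the perfect matching `{v_{2i+1} v_{2i+2}} ∪ {a_i b_i}`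
of the interior of `B_k`. -/
def boxPartner (k n : ℕ) : ℕ :=
  if n < 2 * k then (if n % 2 = 1 then n + 1 else n - 1)
  else (if n % 2 = 0 then n + 1 else n - 1)

theorem boxPartner_mem_boxInterior (hn : n ∈ boxInterior k) :
    boxPartner k n ∈ boxInterior k := by
  rw [mem_boxInterior] at *
  unfold boxPartner
  split_ifs <;> omega

theorem boxPartner_boxPartner (hn : n ∈ boxInterior k) : boxPartner k (boxPartner k n) = n := by
  rw [mem_boxInterior] at hn
  unfold boxPartner
  split_ifs <;> omega

theorem mem_boxEdges_boxPartner (hn : n ∈ boxInterior k) :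
    s(n, boxPartner k n) ∈ boxEdges k := by
  rw [mem_boxInterior] at hn
  unfold boxPartner
  split_ifs
  · exact Or.inl (Or.inl (Or.inl ⟨n, by omega, rfl⟩))
  · exact Or.inl (Or.inl (Or.inl ⟨n - 1, by omega, by rw [Sym2.eq_swap]; congr 1; omega⟩))
  · exact Or.inl (Or.inr ⟨(n - 2 * k) / 2, by omega, by congr 1 <;> omega⟩)
  · exact Or.inl (Or.inr ⟨(n - 2 * k) / 2, by omega, by rw [Sym2.eq_swap]; congr 1 <;> omega⟩)

theorem apply_eq_boxPartner_of_pairs {β : Type*} {r : ℕ → β} {μ : β → β}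
    (hinv : ∀ x ∈ boxInterior k, μ (μ (r x)) = r x)
    (ha : ∀ i < k, μ (r (2 * k + 2 * i)) = r (2 * k + 2 * i + 1))
    (hv : ∀ i, i + 1 < k → μ (r (2 * i + 1)) = r (2 * i + 2)) :
    ∀ x ∈ boxInterior k, μ (r x) = r (boxPartner k x) := by
  have swap : ∀ x ∈ boxInterior k, ∀ y, μ (r x) = r y → μ (r y) = r x :=
    fun x hx y h => by rw [← h, hinv x hx]
  intro x hx
  have hx' := mem_boxInterior.1 hx
  unfold boxPartner
  split_ifs
  · obtain ⟨i, rfl⟩ : ∃ i, x = 2 * i + 1 := ⟨x / 2, by omega⟩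
    exact hv i (by omega)
  · obtain ⟨i, rfl⟩ : ∃ i, x = 2 * i + 2 := ⟨x / 2 - 1, by omega⟩
    rw [show 2 * i + 2 - 1 = 2 * i + 1 by omega]
    exact swap _ (mem_boxInterior.2 (by omega)) _ (hv i (by omega))
  · obtain ⟨i, rfl⟩ : ∃ i, x = 2 * k + 2 * i := ⟨(x - 2 * k) / 2, by omega⟩
    exact ha i (by omega)
  · obtain ⟨i, rfl⟩ : ∃ i, x = 2 * k + 2 * i + 1 := ⟨(x - 2 * k) / 2, by omega⟩
    rw [show 2 * k + 2 * i + 1 - 1 = 2 * k + 2 * i by omega]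
    exact swap _ (mem_boxInterior.2 (by omega)) _ (ha i (by omega))

/-- Matching `B_k` from the end `v_0` inwards: if `v_0` is matched away from the interior, every
`a_i` must take `b_i` and then every `v_{2i+1}` must take `v_{2i+2}`. -/
theorem boxPartner_forced {β : Type*} {r : ℕ → β} {μ : β → β} (hr : Function.Injective r)
    (hinv : ∀ x ∈ boxInterior k, μ (μ (r x)) = r x)
    (hadj : ∀ x ∈ boxInterior k, ∃ y, s(x, y) ∈ boxEdges k ∧ μ (r x) = r y)
    (hv₀ : ∀ x ∈ boxInterior k, μ (r x) ≠ r 0) :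
    ∀ x ∈ boxInterior k, μ (r x) = r (boxPartner k x) := by
  have collide : ∀ x ∈ boxInterior k, ∀ y ∈ boxInterior k, μ (r x) = μ (r y) → x = y :=
    fun x hx y hy h => hr (by rw [← hinv x hx, h, hinv y hy])
  have nbr : ∀ x ∈ boxInterior k, ∃ y, (BoxAdj k x y ∨ BoxAdj k y x) ∧ μ (r x) = r y :=
    fun x hx => (hadj x hx).imp fun y hy => ⟨boxAdj_of_mem_boxEdges hy.1, hy.2⟩
  have forced_a : ∀ i < k, (0 < i → μ (r (2 * i - 1)) = r (2 * i)) →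
      μ (r (2 * k + 2 * i)) = r (2 * k + 2 * i + 1) := by
    intro i hi hprev
    obtain ⟨y, hy, hμy⟩ := nbr (2 * k + 2 * i) (mem_boxInterior.2 (by omega))
    unfold BoxAdj at hy
    obtain rfl | rfl : y = 2 * i ∨ y = 2 * k + 2 * i + 1 := by omega
    · rcases Nat.eq_zero_or_pos i with rfl | hi0
      · exact absurd hμy (hv₀ (2 * k + 2 * 0) (mem_boxInterior.2 (by omega)))
      · have := collide (2 * k + 2 * i) (mem_boxInterior.2 (by omega)) (2 * i - 1)
          (mem_boxInterior.2 (by omega)) (hμy.trans (hprev hi0).symm)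
        omega
    · exact hμy
  have forced_v : ∀ i, i + 1 < k → μ (r (2 * k + 2 * i)) = r (2 * k + 2 * i + 1) →
      (0 < i → μ (r (2 * i - 1)) = r (2 * i)) → μ (r (2 * i + 1)) = r (2 * i + 2) := by
    intro i hi ha hprev
    obtain ⟨y, hy, hμy⟩ := nbr (2 * i + 1) (mem_boxInterior.2 (by omega))
    unfold BoxAdj at hy
    obtain rfl | rfl | rfl : y = 2 * i ∨ y = 2 * i + 2 ∨ y = 2 * k + 2 * i + 1 := by omega
    · rcases Nat.eq_zero_or_pos i with rfl | hi0
      · exact absurd hμy (hv₀ (2 * 0 + 1) (mem_boxInterior.2 (by omega)))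
      · have := collide (2 * i + 1) (mem_boxInterior.2 (by omega)) (2 * i - 1)
          (mem_boxInterior.2 (by omega)) (hμy.trans (hprev hi0).symm)
        omega
    · exact hμy
    · have := collide (2 * i + 1) (mem_boxInterior.2 (by omega)) (2 * k + 2 * i)
        (mem_boxInterior.2 (by omega)) (hμy.trans ha.symm)
      omega
  have forced : ∀ i < k, μ (r (2 * k + 2 * i)) = r (2 * k + 2 * i + 1) ∧
      (i + 1 < k → μ (r (2 * i + 1)) = r (2 * i + 2)) := by
    intro i
    induction i with
    | zero =>
      intro hk
      have ha := forced_a 0 hk (by omega)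
      exact ⟨ha, fun h => forced_v 0 h ha (by omega)⟩
    | succ i ih =>
      intro hi
      have hv : μ (r (2 * (i + 1) - 1)) = r (2 * (i + 1)) := by
        rw [show 2 * (i + 1) - 1 = 2 * i + 1 by omega, show 2 * (i + 1) = 2 * i + 2 by omega]
        exact (ih (by omega)).2 hi
      have ha := forced_a (i + 1) hi fun _ => hv
      exact ⟨ha, fun h => forced_v (i + 1) h ha fun _ => hv⟩
  exact apply_eq_boxPartner_of_pairs hinv (fun i hi => (forced i hi).1)
    fun i hi => (forced i (by omega)).2 hi

def chainEnds : Fin 4 → ℕ × ℕ := ![(2, 0), (0, 10), (4, 6), (6, 8)]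

def chainBase (k : ℕ) (j : Fin 4) : ℕ := 12 + 4 * k * j

def chainRelabel (k : ℕ) (j : Fin 4) : ℕ → ℕ :=
  relabelBox k (chainEnds j).1 (chainEnds j).2 (chainBase k j)

theorem twelve_le_chainBase (k : ℕ) (j : Fin 4) : 12 ≤ chainBase k j :=
  Nat.le_add_right _ _

theorem chainEnds_even_lt_twelve (j : Fin 4) :
    (chainEnds j).1 % 2 = 0 ∧ (chainEnds j).1 < 12 ∧ (chainEnds j).2 % 2 = 0 ∧
      (chainEnds j).2 < 12 ∧ (chainEnds j).1 ≠ (chainEnds j).2 := by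
  fin_cases j <;> decide

theorem chainRelabel_cases (k : ℕ) (j : Fin 4) (n : ℕ) :
    (chainRelabel k j n < 12 ∧ chainRelabel k j n % 2 = 0) ∨
      (n ≠ 0 ∧ n ≠ 2 * k - 1 ∧ chainRelabel k j n = chainBase k j + n) := by
  have := chainEnds_even_lt_twelve j
  unfold chainRelabel relabelBox
  split_ifs <;> omega

theorem chainRelabel_of_mem_boxInterior {j : Fin 4} (hn : n ∈ boxInterior k) :
    chainRelabel k j n = chainBase k j + n := by
  rw [mem_boxInterior] at hn
  unfold chainRelabel relabelBox
  rw [if_neg (by omega), if_neg hn.2.2]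

theorem chainRelabel_injective (k : ℕ) (j : Fin 4) : Function.Injective (chainRelabel k j) := by
  intro a b h
  have := chainEnds_even_lt_twelve j
  have := twelve_le_chainBase k j
  unfold chainRelabel relabelBox at h
  split_ifs at h <;> omega

theorem chainBase_add_inj {j j' : Fin 4} (h : chainBase k j + x = chainBase k j' + y)
    (hx : x < 4 * k) (hy : y < 4 * k) : j = j' ∧ x = y := by
  have hk : 0 < 4 * k := by omega
  have h' : x + 4 * k * j = y + 4 * k * j' := by unfold chainBase at h; omega
  have hj : (j : ℕ) = j' := by
    have := congrArg (· / (4 * k)) h'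
    simpa only [Nat.add_mul_div_left _ _ hk, Nat.div_eq_of_lt hx, Nat.div_eq_of_lt hy,
      zero_add] using this
  exact ⟨Fin.ext hj, by rw [hj] at h'; omega⟩

theorem chainRelabel_eq_chainBase_add {j j' : Fin 4} {a : ℕ}
    (h : chainRelabel k j' a = chainBase k j + x) (ha : a < 4 * k) (hx : x < 4 * k) :
    j' = j ∧ a = x := by
  have := twelve_le_chainBase k j
  rcases chainRelabel_cases k j' a with ⟨hlt, -⟩ | ⟨-, -, heq⟩
  · omega
  · exact chainBase_add_inj (heq.symm.trans h) ha hx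

theorem mem_gadgetEdges {e : Sym2 ℕ} :
    e ∈ gadgetEdges k ↔ (∃ i < 12, e = s(i, (i + 1) % 12)) ∨ e = s(0, 6) ∨
      ∃ j, e ∈ Sym2.map (chainRelabel k j) '' boxEdges k := by
  have h0 : chainRelabel k 0 = relabelBox k 2 0 12 := by
    change relabelBox k 2 0 (12 + 4 * k * 0) = _
    ring_nf
  have h1 : chainRelabel k 1 = relabelBox k 0 10 (12 + 4 * k) := by
    change relabelBox k 0 10 (12 + 4 * k * 1) = _
    ring_nf
  have h2 : chainRelabel k 2 = relabelBox k 4 6 (12 + 8 * k) := by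
    change relabelBox k 4 6 (12 + 4 * k * 2) = _
    ring_nf
  have h3 : chainRelabel k 3 = relabelBox k 6 8 (12 + 12 * k) := by
    change relabelBox k 6 8 (12 + 4 * k * 3) = _
    ring_nf
  have hex (P : Fin 4 → Prop) : (∃ j, P j) ↔ P 0 ∨ P 1 ∨ P 2 ∨ P 3 :=
    ⟨fun ⟨j, hj⟩ => by fin_cases j <;> simp_all,
      by rintro (h | h | h | h) <;> exact ⟨_, h⟩⟩
  simp only [gadgetEdges, Set.mem_union, Set.mem_singleton_iff, Set.mem_ofPred_eq, hex, h0, h1, h2,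
    h3, or_assoc]

theorem mem_gadgetVerts :
    m ∈ gadgetVerts k ↔ m < 12 ∨ ∃ j, ∃ n ∈ boxInterior k, m = chainBase k j + n := by
  simp only [gadgetVerts, chainBase, mem_boxInterior, Set.mem_union, Set.mem_ofPred_eq,
    Fin.exists_iff, exists_prop, and_assoc]

open SimpleGraph

theorem eq_of_mem_gadgetEdges_of_odd (hu : u < 12) (hodd : u % 2 = 1)
    (h : s(u, v) ∈ gadgetEdges k) : v = (u + 1) % 12 ∨ v = (u + 11) % 12 := by
  rcases mem_gadgetEdges.1 h with ⟨i, hi, he⟩ | he | ⟨j, e, he, hme⟩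
  · rw [Sym2.eq_iff] at he
    omega
  · rw [Sym2.eq_iff] at he
    omega
  · induction e using Sym2.ind with | _ a b => ?_
    rw [Sym2.map_mk, Sym2.eq_iff] at hme
    have := chainRelabel_cases k j a
    have := chainRelabel_cases k j b
    have := twelve_le_chainBase k j
    omega

theorem exists_boxEdge_of_mem_gadgetEdges {j : Fin 4} (hx : x ∈ boxInterior k)
    (h : s(chainRelabel k j x, v) ∈ gadgetEdges k) :
    ∃ y, s(x, y) ∈ boxEdges k ∧ v = chainRelabel k j y := by
  have hx4 := (mem_boxInterior.1 hx).2.1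
  have := twelve_le_chainBase k j
  rw [chainRelabel_of_mem_boxInterior hx] at h
  rcases mem_gadgetEdges.1 h with ⟨i, hi, he⟩ | he | ⟨j', e, he, hme⟩
  · rw [Sym2.eq_iff] at he
    omega
  · rw [Sym2.eq_iff] at he
    omega
  · induction e using Sym2.ind with | _ a b => ?_
    rw [Sym2.map_mk, Sym2.eq_iff] at hme
    rcases hme with ⟨ha, hb⟩ | ⟨hb, ha⟩
    · obtain ⟨rfl, rfl⟩ := chainRelabel_eq_chainBase_add ha (lt_of_mem_boxEdges he) hx4
      exact ⟨b, he, hb.symm⟩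
    · rw [Sym2.eq_swap] at he
      obtain ⟨rfl, rfl⟩ := chainRelabel_eq_chainBase_add ha (lt_of_mem_boxEdges he) hx4
      exact ⟨a, he, hb.symm⟩

def cyclePartner (d u : ℕ) : ℕ := if u % 2 = 1 then (u + d) % 12 else (u + (12 - d)) % 12

/-- For `d = 1` and `d = 11` these are the two perfect matchings of `H_k`; a vertex `m ≥ 12` is
the interior vertex `(m - 12) % (4k)` of the copy `(m - 12) / (4k)` of `B_k`. -/
def gadgetPartner (k d m : ℕ) : ℕ :=
  if m < 12 then cyclePartner d m
  else 12 + 4 * k * ((m - 12) / (4 * k)) + boxPartner k ((m - 12) % (4 * k))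

variable {d : ℕ} {μ : ℕ → ℕ}

theorem cyclePartner_lt (d u : ℕ) : cyclePartner d u < 12 := by
  unfold cyclePartner
  split_ifs <;> omega

theorem cyclePartner_cyclePartner (hd : d = 1 ∨ d = 11) (hu : u < 12) :
    cyclePartner d (cyclePartner d u) = u := by
  unfold cyclePartner
  split_ifs <;> omega

theorem mem_gadgetEdges_cyclePartner (hd : d = 1 ∨ d = 11) (hu : u < 12) :
    s(u, cyclePartner d u) ∈ gadgetEdges k := by
  refine mem_gadgetEdges.2 (Or.inl ?_)
  unfold cyclePartner
  split_ifs <;> rcases hd with rfl | rfl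
  · exact ⟨u, hu, rfl⟩
  · exact ⟨(u + 11) % 12, by omega, by rw [Sym2.eq_swap]; congr 1; omega⟩
  · exact ⟨(u + 11) % 12, by omega, by rw [Sym2.eq_swap]; congr 1; omega⟩
  · exact ⟨u, hu, rfl⟩

theorem gadgetPartner_chainBase_add {j : Fin 4} (hn : n < 4 * k) :
    gadgetPartner k d (chainBase k j + n) = chainBase k j + boxPartner k n := by
  have hk : 0 < 4 * k := by omega
  unfold gadgetPartner chainBase
  rw [if_neg (by omega), show 12 + 4 * k * j + n - 12 = n + 4 * k * j by omega,
    Nat.add_mul_div_left _ _ hk, Nat.add_mul_mod_self_left, Nat.div_eq_of_lt hn,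
    Nat.mod_eq_of_lt hn, zero_add]

theorem isPairing_gadgetPartner (hd : d = 1 ∨ d = 11) :
    (fromEdgeSet (gadgetEdges k)).IsPairing (gadgetVerts k) (gadgetPartner k d) := by
  have hcyc (u : ℕ) (hu : u < 12) : gadgetPartner k d u = cyclePartner d u := if_pos hu
  refine ⟨fun m hm => ?_, fun m hm => ?_, fun m hm => (fromEdgeSet_adj _).2 ?_⟩ <;>
    rcases mem_gadgetVerts.1 hm with hm | ⟨j, n, hn, rfl⟩
  · rw [hcyc m hm]
    exact Or.inl (cyclePartner_lt d m)
  · rw [gadgetPartner_chainBase_add (mem_boxInterior.1 hn).2.1]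
    exact mem_gadgetVerts.2 (Or.inr ⟨j, _, boxPartner_mem_boxInterior hn, rfl⟩)
  · rw [hcyc m hm, hcyc _ (cyclePartner_lt d m), cyclePartner_cyclePartner hd hm]
  · rw [gadgetPartner_chainBase_add (mem_boxInterior.1 hn).2.1,
      gadgetPartner_chainBase_add (mem_boxInterior.1 (boxPartner_mem_boxInterior hn)).2.1,
      boxPartner_boxPartner hn]
  · rw [hcyc m hm]
    refine ⟨mem_gadgetEdges_cyclePartner hd hm, ?_⟩
    unfold cyclePartner
    split_ifs <;> omega
  · have hp := boxPartner_mem_boxInterior hn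
    rw [gadgetPartner_chainBase_add (mem_boxInterior.1 hn).2.1,
      ← chainRelabel_of_mem_boxInterior hn, ← chainRelabel_of_mem_boxInterior hp]
    refine ⟨mem_gadgetEdges.2
      (Or.inr (Or.inr ⟨j, _, mem_boxEdges_boxPartner hn, Sym2.map_mk ..⟩)),
      (chainRelabel_injective k j).ne ?_⟩
    rw [mem_boxInterior] at hn
    unfold boxPartner
    split_ifs <;> omega

theorem mem_gadgetEdges_of_isPairing
    (hμ : (fromEdgeSet (gadgetEdges k)).IsPairing (gadgetVerts k) μ) (hm : m ∈ gadgetVerts k) :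
    s(m, μ m) ∈ gadgetEdges k :=
  ((fromEdgeSet_adj _).1 (hμ.adj m hm)).1

theorem cycle_step (hμ : (fromEdgeSet (gadgetEdges k)).IsPairing (gadgetVerts k) μ)
    (hu : u < 12) (hodd : u % 2 = 1) (h : μ u = (u + 1) % 12) :
    μ ((u + 2) % 12) = (u + 3) % 12 := by
  have hmem (w : ℕ) (hw : w < 12) : w ∈ gadgetVerts k := Or.inl hw
  rcases eq_of_mem_gadgetEdges_of_odd (u := (u + 2) % 12) (by omega) (by omega)
    (mem_gadgetEdges_of_isPairing hμ (hmem _ (by omega))) with h' | h'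
  · rw [h']
    omega
  · have h₁ := hμ.apply_apply u (hmem u hu)
    have h₂ := hμ.apply_apply _ (hmem ((u + 2) % 12) (by omega))
    rw [h] at h₁
    rw [h', show ((u + 2) % 12 + 11) % 12 = (u + 1) % 12 by omega, h₁] at h₂
    omega

theorem odd_cycle_forced (hμ : (fromEdgeSet (gadgetEdges k)).IsPairing (gadgetVerts k) μ) :
    ∃ d, (d = 1 ∨ d = 11) ∧ ∀ u < 12, u % 2 = 1 → μ u = (u + d) % 12 := by
  by_cases hup : ∃ u₀ < 12, u₀ % 2 = 1 ∧ μ u₀ = (u₀ + 1) % 12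
  · obtain ⟨u₀, hu₀, hodd₀, h₀⟩ := hup
    have hall (i : ℕ) : μ ((u₀ + 2 * i) % 12) = ((u₀ + 2 * i) % 12 + 1) % 12 := by
      induction i with
      | zero => rwa [Nat.mul_zero, Nat.add_zero, Nat.mod_eq_of_lt hu₀]
      | succ i ih =>
        have := cycle_step hμ (Nat.mod_lt _ (by norm_num)) (by omega) ih
        rwa [show ((u₀ + 2 * i) % 12 + 2) % 12 = (u₀ + 2 * (i + 1)) % 12 by omega,
          show ((u₀ + 2 * i) % 12 + 3) % 12 = ((u₀ + 2 * (i + 1)) % 12 + 1) % 12 by omega]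
          at this
    refine ⟨1, Or.inl rfl, fun u hu hodd => ?_⟩
    rw [← show (u₀ + 2 * ((u + 12 - u₀) / 2)) % 12 = u by omega]
    exact hall _
  · push Not at hup
    refine ⟨11, Or.inr rfl, fun u hu hodd => ?_⟩
    exact (eq_of_mem_gadgetEdges_of_odd hu hodd
      (mem_gadgetEdges_of_isPairing hμ (Or.inl hu))).resolve_left (hup u hu hodd)

theorem cycle_forced (hμ : (fromEdgeSet (gadgetEdges k)).IsPairing (gadgetVerts k) μ) :
    ∃ d, (d = 1 ∨ d = 11) ∧ ∀ u < 12, μ u = cyclePartner d u := by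
  obtain ⟨d, hd, hodd⟩ := odd_cycle_forced hμ
  refine ⟨d, hd, fun u hu => ?_⟩
  unfold cyclePartner
  split_ifs with h
  · exact hodd u hu h
  · have hw := hodd ((u + (12 - d)) % 12) (by omega) (by omega)
    rw [show ((u + (12 - d)) % 12 + d) % 12 = u by omega] at hw
    have := hμ.apply_apply ((u + (12 - d)) % 12) (Or.inl (Nat.mod_lt _ (by norm_num)))
    rwa [hw] at this

theorem chain_forced (hμ : (fromEdgeSet (gadgetEdges k)).IsPairing (gadgetVerts k) μ)
    (hcycle : ∀ u < 12, μ u < 12) (j : Fin 4) :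
    ∀ x ∈ boxInterior k, μ (chainRelabel k j x) = chainRelabel k j (boxPartner k x) := by
  have hmem (x : ℕ) (hx : x ∈ boxInterior k) : chainRelabel k j x ∈ gadgetVerts k := by
    rw [chainRelabel_of_mem_boxInterior hx]
    exact mem_gadgetVerts.2 (Or.inr ⟨j, x, hx, rfl⟩)
  refine boxPartner_forced (chainRelabel_injective k j) (fun x hx => hμ.apply_apply _ (hmem x hx))
    (fun x hx =>
      exists_boxEdge_of_mem_gadgetEdges hx (mem_gadgetEdges_of_isPairing hμ (hmem x hx)))
    fun x hx h => ?_
  have hend : chainRelabel k j 0 < 12 := by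
    rcases chainRelabel_cases k j 0 with h0 | h0
    exacts [h0.1, absurd rfl h0.1]
  have hx12 := hcycle _ hend
  rw [← h, hμ.apply_apply _ (hmem x hx), chainRelabel_of_mem_boxInterior hx] at hx12
  have := twelve_le_chainBase k j
  omega

theorem eqOn_gadgetPartner
    (hμ : (fromEdgeSet (gadgetEdges k)).IsPairing (gadgetVerts k) μ) :
    ∃ d, (d = 1 ∨ d = 11) ∧ Set.EqOn μ (gadgetPartner k d) (gadgetVerts k) := by
  obtain ⟨d, hd, hcycle⟩ := cycle_forced hμ
  refine ⟨d, hd, fun m hm => ?_⟩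
  rcases mem_gadgetVerts.1 hm with hm | ⟨j, n, hn, rfl⟩
  · rw [gadgetPartner, if_pos hm, hcycle m hm]
  · rw [gadgetPartner_chainBase_add (mem_boxInterior.1 hn).2.1,
      ← chainRelabel_of_mem_boxInterior hn,
      ← chainRelabel_of_mem_boxInterior (boxPartner_mem_boxInterior hn)]
    exact chain_forced hμ (fun u hu => hcycle u hu ▸ cyclePartner_lt d u) j n hn

theorem ncard_gadgetVerts (hk : 1 ≤ k) : (gadgetVerts k).ncard = 16 * k + 4 := by
  classical
  set chains := (Finset.univ ×ˢ boxInterior k).image fun p : Fin 4 × ℕ => chainBase k p.1 + p.2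
  have hverts : gadgetVerts k = ↑(Finset.range 12 ∪ chains) := by
    ext m
    simp [mem_gadgetVerts, chains, eq_comm]
  have hdisj : Disjoint (Finset.range 12) chains := by
    rw [Finset.disjoint_left]
    intro m hm hm'
    simp only [chains, Finset.mem_image, Finset.mem_product] at hm'
    obtain ⟨⟨j, n⟩, -, rfl⟩ := hm'
    have := twelve_le_chainBase k j
    simp only [Finset.mem_range] at hm
    omega
  have hinj : Set.InjOn (fun p : Fin 4 × ℕ => chainBase k p.1 + p.2)
      (Finset.univ ×ˢ boxInterior k : Finset (Fin 4 × ℕ)) := by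
    rintro ⟨j, x⟩ hx ⟨j', y⟩ hy h
    simp only [Finset.coe_product, Set.mem_prod, Finset.mem_coe, mem_boxInterior] at hx hy
    obtain ⟨rfl, rfl⟩ := chainBase_add_inj h hx.2.2.1 hy.2.2.1
    rfl
  rw [hverts, Set.ncard_coe_finset, Finset.card_union_of_disjoint hdisj,
    Finset.card_image_of_injOn hinj, Finset.card_product, Finset.card_univ, Fintype.card_fin,
    Finset.card_range, card_boxInterior hk]
  omega

/-- For every `k ≥ 1`, the torpid-mixing gadget `H_k` has `16k + 4` vertices and
exactly `2` perfect matchings. -/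
theorem gadgetGraph_card_and_pmCount (k : ℕ) (hk : 1 ≤ k) :
    (gadgetVerts k).ncard = 16 * k + 4 ∧ pmCount (gadgetGraph k) = 2 := by
  refine ⟨ncard_gadgetVerts hk, ?_⟩
  have h₁ := isPairing_gadgetPartner (k := k) (d := 1) (by omega)
  have h₁₁ := isPairing_gadgetPartner (k := k) (d := 11) (by omega)
  rw [pmCount, Nat.card_eq_two_iff]
  refine ⟨⟨h₁.toSubgraph, h₁.isPerfectMatching⟩, ⟨h₁₁.toSubgraph, h₁₁.isPerfectMatching⟩,
    ?_, ?_⟩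
  · intro h
    have h1 := (h₁.toSubgraph_eq_iff h₁₁).1 (congrArg Subtype.val h)
      (Or.inl (by norm_num : 1 < 12))
    simp [gadgetPartner, cyclePartner] at h1
  · refine Set.eq_univ_of_forall fun ⟨M, hM⟩ => ?_
    obtain ⟨μ, hμ, rfl⟩ := hM.exists_isPairing
    obtain ⟨d, rfl | rfl, hμd⟩ := eqOn_gadgetPartner hμ
    · exact Or.inl (Subtype.ext ((hμ.toSubgraph_eq_iff h₁).2 hμd))
    · exact Or.inr (Subtype.ext ((hμ.toSubgraph_eq_iff h₁₁).2 hμd))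
end

section
/- For every k ≥ 1, the torpid-mixing gadget H_k has exactly one matching that covers every vertex except u and v, i.e., |N_{H_k}(u, v)| = 1. -/
/-!
Each copy of `B_k` meets the rest of `H_k` only at its two endpoints, and the guard of the copy
(`x₁`, `y₁`, `x₂` or `y₂`) is adjacent to exactly these two endpoints, so in a near-perfect
matching one endpoint of every copy is taken by its guard, not by the copy. Peeling the
boxes one by one from that endpoint (through the reflection of `B_k` when it is `v_{2k-1}`)
forces the interior of every copy to be matched by its unique perfect matching. What is left is
the 12-cycle with the chord `{a, b}`, minus `u` and `v`: each guard must take the endpoint next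
to a hole, and then `a` can only be matched to `b`.
-/

/-- The relation "is matched to" of a matching. -/
structure IsMatchingRel {α : Type*} (P : α → α → Prop) : Prop where
  symm : ∀ {x y}, P x y → P y x
  uniq : ∀ {x y z}, P x y → P x z → y = z

theorem IsMatchingRel.rel_of_shared_rival {α : Type*} {P : α → α → Prop} (hP : IsMatchingRel P)
    {g e f : α} (hne : e ≠ g) (hg : ∃ y, P g y ∧ (y = e ∨ y = f))
    (he : ∃ y, P e y ∧ (y = g ∨ y = f)) : P g e := by
  obtain ⟨y, hy, rfl | rfl⟩ := hg
  · exact hy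
  obtain ⟨z, hz, rfl | rfl⟩ := he
  · exact hP.symm hz
  · exact absurd (hP.uniq (hP.symm hz) (hP.symm hy)) hne

namespace ChainOfBoxes

/-- One direction of an edge of `B_k` in the labelling of `boxEdges`: a path edge `{n, n + 1}`,
an edge `{a_i, b_i}`, or a rung `{n, n + 2k}` (`{v_{2i}, a_i}` or `{v_{2i+1}, b_i}`). -/
def boxArc (k a b : ℕ) : Prop :=
  b = a + 1 ∧ (a + 2 ≤ 2 * k ∨ 2 * k ≤ a ∧ a + 1 < 4 * k ∧ (a - 2 * k) % 2 = 0) ∨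
  b = a + 2 * k ∧ a < 2 * k

def boxAdj (k a b : ℕ) : Prop := boxArc k a b ∨ boxArc k b a

theorem boxAdj_comm {k a b : ℕ} : boxAdj k a b ↔ boxAdj k b a := Or.comm

theorem mem_boxEdges_iff_s3 {k a b : ℕ} : s(a, b) ∈ boxEdges k ↔ boxAdj k a b := by
  simp only [boxEdges, Set.mem_union, Set.mem_ofPred_eq, Sym2.eq_iff, boxAdj, boxArc]
  constructor
  · rintro (((⟨j, hj, he⟩ | ⟨i, hi, he⟩) | ⟨i, hi, he⟩) | ⟨i, hi, he⟩) <;> omega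
  · rintro ((⟨rfl, h | h⟩ | ⟨rfl, h⟩) | (⟨rfl, h | h⟩ | ⟨rfl, h⟩))
    · exact Or.inl (Or.inl (Or.inl ⟨a, h, by omega⟩))
    · exact Or.inl (Or.inr ⟨(a - 2 * k) / 2, by omega, by omega⟩)
    · rcases Nat.even_or_odd' a with ⟨i, rfl | rfl⟩
      · exact Or.inl (Or.inl (Or.inr ⟨i, by omega, by omega⟩))
      · exact Or.inr ⟨i, by omega, by omega⟩
    · exact Or.inl (Or.inl (Or.inl ⟨b, h, by omega⟩))
    · exact Or.inl (Or.inr ⟨(b - 2 * k) / 2, by omega, by omega⟩)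
    · rcases Nat.even_or_odd' b with ⟨i, rfl | rfl⟩
      · exact Or.inl (Or.inl (Or.inr ⟨i, by omega, by omega⟩))
      · exact Or.inr ⟨i, by omega, by omega⟩

def IsInterior (k n : ℕ) : Prop := 0 < n ∧ n < 4 * k ∧ n ≠ 2 * k - 1

/-- The automorphism of `B_k` reversing the path: `v_i ↦ v_{2k-1-i}`, `a_i ↦ b_{k-1-i}`,
`b_i ↦ a_{k-1-i}`. -/
def reflect (k n : ℕ) : ℕ := if n < 2 * k then 2 * k - 1 - n else 6 * k - 1 - n

/-- The partner of an interior vertex in the unique perfect matching of the interior of `B_k`: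
`{v_{2i+1}, v_{2i+2}}` and `{a_i, b_i}`. -/
def partner (k n : ℕ) : ℕ :=
  if n < 2 * k then (if n % 2 = 1 then n + 1 else n - 1)
  else (if (n - 2 * k) % 2 = 0 then n + 1 else n - 1)

variable {k a b n : ℕ}

theorem boxAdj.lt (h : boxAdj k a b) : a < 4 * k ∧ b < 4 * k := by
  unfold boxAdj boxArc at h; omega

theorem reflect_zero : reflect k 0 = 2 * k - 1 := by
  unfold reflect; split <;> omega

theorem reflect_lt (h : n < 4 * k) : reflect k n < 4 * k := by
  unfold reflect; split <;> omega

theorem reflect_reflect (h : n < 4 * k) : reflect k (reflect k n) = n := by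
  unfold reflect; split <;> split <;> omega

theorem isInterior_reflect (h : IsInterior k n) : IsInterior k (reflect k n) := by
  unfold IsInterior reflect at *; split <;> omega

theorem boxAdj_reflect (h : boxAdj k a b) : boxAdj k (reflect k a) (reflect k b) := by
  unfold boxAdj boxArc reflect at *; split_ifs <;> omega

theorem isInterior_partner (h : IsInterior k n) : IsInterior k (partner k n) := by
  unfold IsInterior partner at *; split_ifs <;> omega

theorem partner_ne_self (h : IsInterior k n) : partner k n ≠ n := by
  unfold IsInterior at h; unfold partner; split_ifs <;> omega

theorem partner_partner (h : IsInterior k n) : partner k (partner k n) = n := by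
  unfold IsInterior at h; unfold partner; split_ifs <;> omega

theorem boxAdj_partner (h : IsInterior k n) : boxAdj k n (partner k n) := by
  unfold IsInterior at h; unfold boxAdj boxArc partner; split_ifs <;> omega

theorem reflect_partner_reflect (h : IsInterior k n) :
    reflect k (partner k (reflect k n)) = partner k n := by
  unfold IsInterior at h; unfold reflect partner; split_ifs <;> omega

/-- `F` embeds `B_k` into a graph with matching `P` in which the interior of the copy is
covered and attached to the rest only through the two endpoints. -/
structure AttachedBox {α : Type*} (k : ℕ) (P : α → α → Prop) (F : ℕ → α) : Prop
    extends IsMatchingRel P where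
  exists_rel : ∀ {n}, IsInterior k n → ∃ y, P (F n) y
  rel_interior : ∀ {n y}, IsInterior k n → P (F n) y → ∃ m, boxAdj k n m ∧ y = F m
  injOn : ∀ {m m'}, m < 4 * k → m' < 4 * k → F m = F m' → m = m'

namespace AttachedBox

variable {α : Type*} {P : α → α → Prop} {F : ℕ → α}

theorem exists_boxAdj (H : AttachedBox k P F) (hn : IsInterior k n) :
    ∃ m, boxAdj k n m ∧ P (F n) (F m) := by
  obtain ⟨y, hy⟩ := H.exists_rel hn
  obtain ⟨m, hm, rfl⟩ := H.rel_interior hn hy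
  exact ⟨m, hm, hy⟩

theorem eq_of_rel {x : α} {m m' : ℕ} (H : AttachedBox k P F) (hm : m < 4 * k) (hm' : m' < 4 * k)
    (h : P x (F m)) (h' : P x (F m')) : m = m' :=
  H.injOn hm hm' (H.uniq h h')

theorem comp_reflect (H : AttachedBox k P F) : AttachedBox k P (F ∘ reflect k) where
  toIsMatchingRel := H.toIsMatchingRel
  exists_rel hn := H.exists_rel (isInterior_reflect hn)
  rel_interior {n y} hn hy := by
    obtain ⟨m, hm, rfl⟩ := H.rel_interior (isInterior_reflect hn) hy
    refine ⟨reflect k m, ?_, by simp only [Function.comp_apply, reflect_reflect hm.lt.2]⟩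
    simpa only [reflect_reflect hn.2.1] using boxAdj_reflect hm
  injOn {m m'} hm hm' h := by
    rw [← reflect_reflect hm, ← reflect_reflect hm', H.injOn (reflect_lt hm) (reflect_lt hm') h]

/-- Peeling one box: if `v_{2i}` is not matched to `a_i`, then `a_i` must take `b_i`, and
then `v_{2i+1}` can only take `v_{2i+2}`. -/
theorem rung (H : AttachedBox k P F) {i : ℕ} (hi : i < k)
    (ha : ¬P (F (2 * i)) (F (2 * k + 2 * i))) :
    P (F (2 * k + 2 * i)) (F (2 * k + 2 * i + 1)) ∧
      (i + 1 < k → ¬P (F (2 * i)) (F (2 * i + 1)) → P (F (2 * i + 1)) (F (2 * i + 2))) := by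
  have hab : P (F (2 * k + 2 * i)) (F (2 * k + 2 * i + 1)) := by
    obtain ⟨m, hm, hP⟩ := H.exists_boxAdj (n := 2 * k + 2 * i) (by unfold IsInterior; omega)
    obtain rfl | rfl : m = 2 * i ∨ m = 2 * k + 2 * i + 1 := by unfold boxAdj boxArc at hm; omega
    · exact absurd (H.symm hP) ha
    · exact hP
  refine ⟨hab, fun hi' hv => ?_⟩
  obtain ⟨m, hm, hP⟩ := H.exists_boxAdj (n := 2 * i + 1) (by unfold IsInterior; omega)
  obtain rfl | rfl | rfl : m = 2 * i ∨ m = 2 * i + 2 ∨ m = 2 * k + 2 * i + 1 := by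
    unfold boxAdj boxArc at hm; omega
  · exact absurd (H.symm hP) hv
  · exact hP
  · have := H.eq_of_rel (by omega) (by omega) (H.symm hP) (H.symm hab)
    omega

theorem rungs (H : AttachedBox k P F) (h0 : ∀ n, IsInterior k n → ¬P (F 0) (F n)) {i : ℕ}
    (hi : i < k) :
    P (F (2 * k + 2 * i)) (F (2 * k + 2 * i + 1)) ∧
      (i + 1 < k → P (F (2 * i + 1)) (F (2 * i + 2))) := by
  suffices free : ¬P (F (2 * i)) (F (2 * k + 2 * i)) ∧
      (i + 1 < k → ¬P (F (2 * i)) (F (2 * i + 1))) by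
    obtain ⟨hab, hv⟩ := H.rung hi free.1
    exact ⟨hab, fun hi' => hv hi' (free.2 hi')⟩
  induction i with
  | zero =>
    simp only [mul_zero, add_zero, zero_add]
    exact ⟨h0 _ (by unfold IsInterior; omega), fun h1 => h0 _ (by unfold IsInterior; omega)⟩
  | succ i ih =>
    obtain ⟨hab, hv⟩ := H.rung (by omega) (ih (by omega)).1
    -- `v_{2i+2}` is already matched to `v_{2i+1}`
    have hv := H.symm (hv (by omega) ((ih (by omega)).2 (by omega)))
    refine ⟨fun h => ?_, fun _ h => ?_⟩
    · have := H.eq_of_rel (by omega) (by omega) hv h; omega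
    · have := H.eq_of_rel (by omega) (by omega) hv h; omega

theorem rel_partner_of_first (H : AttachedBox k P F)
    (h0 : ∀ n, IsInterior k n → ¬P (F 0) (F n)) (hn : IsInterior k n) :
    P (F n) (F (partner k n)) := by
  unfold IsInterior at hn
  by_cases hpath : n < 2 * k
  · obtain ⟨i, rfl | rfl⟩ : ∃ i, n = 2 * i + 1 ∨ n = 2 * i + 2 := ⟨(n - 1) / 2, by omega⟩
    · rw [show partner k (2 * i + 1) = 2 * i + 2 by unfold partner; split_ifs <;> omega]
      exact (H.rungs h0 (by omega)).2 (by omega)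
    · rw [show partner k (2 * i + 2) = 2 * i + 1 by unfold partner; split_ifs <;> omega]
      exact H.symm ((H.rungs h0 (by omega)).2 (by omega))
  · obtain ⟨i, rfl | rfl⟩ : ∃ i, n = 2 * k + 2 * i ∨ n = 2 * k + 2 * i + 1 :=
      ⟨(n - 2 * k) / 2, by omega⟩
    · rw [show partner k (2 * k + 2 * i) = 2 * k + 2 * i + 1 by unfold partner; split_ifs <;> omega]
      exact (H.rungs h0 (by omega)).1
    · rw [show partner k (2 * k + 2 * i + 1) = 2 * k + 2 * i by
        unfold partner; split_ifs <;> omega]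
      exact H.symm (H.rungs h0 (by omega)).1

theorem rel_partner_of_last (H : AttachedBox k P F)
    (hl : ∀ n, IsInterior k n → ¬P (F (2 * k - 1)) (F n)) (hn : IsInterior k n) :
    P (F n) (F (partner k n)) := by
  have h0 : ∀ n, IsInterior k n → ¬P ((F ∘ reflect k) 0) ((F ∘ reflect k) n) := fun n hn => by
    simpa only [Function.comp_apply, reflect_zero] using hl _ (isInterior_reflect hn)
  have := H.comp_reflect.rel_partner_of_first h0 (isInterior_reflect hn)
  simpa only [Function.comp_apply, reflect_reflect hn.2.1, reflect_partner_reflect hn] using this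

theorem rel_partner_of_guard (H : AttachedBox k P F) {g : α}
    (hg : ∀ n, IsInterior k n → g ≠ F n) (hgP : P g (F 0) ∨ P g (F (2 * k - 1)))
    (hn : IsInterior k n) : P (F n) (F (partner k n)) := by
  rcases hgP with h | h
  · exact H.rel_partner_of_first (fun m hm hP => hg m hm (H.uniq (H.symm h) hP)) hn
  · exact H.rel_partner_of_last (fun m hm hP => hg m hm (H.uniq (H.symm h) hP)) hn

end AttachedBox

end ChainOfBoxes

namespace TorpidGadget

open ChainOfBoxes

theorem mk_mem_image_boxEdges {α : Type*} {f : ℕ → α} {k : ℕ} {x y : α} :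
    s(x, y) ∈ Sym2.map f '' boxEdges k ↔ ∃ a b, boxAdj k a b ∧ x = f a ∧ y = f b := by
  constructor
  · rintro ⟨e, he, hxy⟩
    induction e using Sym2.ind with
    | _ a b =>
      rw [Sym2.map_mk, Sym2.eq_iff] at hxy
      rw [mem_boxEdges_iff_s3] at he
      rcases hxy with ⟨rfl, rfl⟩ | ⟨rfl, rfl⟩
      exacts [⟨a, b, he, rfl, rfl⟩, ⟨b, a, boxAdj_comm.1 he, rfl, rfl⟩]
  · rintro ⟨a, b, h, rfl, rfl⟩
    exact ⟨s(a, b), mem_boxEdges_iff_s3.2 h, rfl⟩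

def cycleArc (x y : ℕ) : Prop := x < 12 ∧ y = (x + 1) % 12 ∨ x = 0 ∧ y = 6

def cycleAdj (x y : ℕ) : Prop := cycleArc x y ∨ cycleArc y x

def copyFirst : ℕ → ℕ
  | 0 => 2 | 1 => 0 | 2 => 4 | _ => 6

def copyLast : ℕ → ℕ
  | 0 => 0 | 1 => 10 | 2 => 6 | _ => 8

def copyEmb (k j : ℕ) : ℕ → ℕ := relabelBox k (copyFirst j) (copyLast j) (12 + 4 * k * j)

variable {k j n x y : ℕ}

theorem mem_gadgetEdges_iff :
    s(x, y) ∈ gadgetEdges k ↔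
      cycleAdj x y ∨ ∃ j < 4, ∃ a b, boxAdj k a b ∧ x = copyEmb k j a ∧ y = copyEmb k j b := by
  have hcycle : ((∃ i, i < 12 ∧ s(x, y) = s(i, (i + 1) % 12)) ∨ s(x, y) = s(0, 6)) ↔
      cycleAdj x y := by
    simp only [cycleAdj, cycleArc, Sym2.eq_iff]
    constructor
    · rintro (⟨i, hi, h⟩ | h) <;> omega
    · rintro ((h | h) | (h | h))
      exacts [Or.inl ⟨x, by omega⟩, Or.inr (by omega), Or.inl ⟨y, by omega⟩, Or.inr (by omega)]
  simp only [gadgetEdges, Set.mem_union, Set.mem_ofPred_eq, Set.mem_singleton_iff,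
    mk_mem_image_boxEdges]
  rw [hcycle]
  simp only [Nat.exists_lt_succ_left, Nat.not_lt_zero, false_and, exists_false, or_false,
    copyEmb, copyFirst, copyLast, zero_add, mul_zero, add_zero, mul_one,
    show 4 * k * (1 + 1) = 8 * k by ring, show 4 * k * (1 + 1 + 1) = 12 * k by ring, or_assoc]

/-- The pairs of endpoints of one copy of `B_k`; they are adjacent when `k = 1`. -/
def endpointArc (x y : ℕ) : Prop := x = 2 ∧ y = 0 ∨ x = 0 ∧ y = 10 ∨ x = 4 ∧ y = 6 ∨ x = 6 ∧ y = 8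

theorem endpointArc_copyFirst_copyLast (hj : j < 4) : endpointArc (copyFirst j) (copyLast j) := by
  interval_cases j <;> simp [endpointArc, copyFirst, copyLast]

theorem endpointArc_or_of_ne (hj : j < 4) (hx : x = copyFirst j ∨ x = copyLast j)
    (hy : y = copyFirst j ∨ y = copyLast j) (hne : x ≠ y) :
    endpointArc x y ∨ endpointArc y x := by
  interval_cases j <;> rcases hx with rfl | rfl <;> rcases hy with rfl | rfl <;>
    simp_all [endpointArc, copyFirst, copyLast]

/-- The vertices `x₁, y₁, x₂, y₂`, whose only neighbours are the two endpoints of a copy. -/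
def copyGuard : ℕ → ℕ
  | 0 => 1 | 1 => 11 | 2 => 5 | _ => 7

theorem copyGuard_spec (hj : j < 4) :
    copyGuard j < 12 ∧ copyGuard j % 2 = 1 ∧ copyGuard j ≠ 3 ∧ copyGuard j ≠ 9 := by
  interval_cases j <;> decide

theorem cycleAdj_copyGuard (hj : j < 4) (h : cycleAdj (copyGuard j) y) :
    y = copyFirst j ∨ y = copyLast j := by
  interval_cases j <;> simp only [copyGuard, copyFirst, copyLast, cycleAdj, cycleArc] at h ⊢ <;>
    omega

theorem copyEmb_zero : copyEmb k j 0 = copyFirst j := by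
  simp [copyEmb, relabelBox]

theorem copyEmb_last (hk : 1 ≤ k) : copyEmb k j (2 * k - 1) = copyLast j := by
  simp only [copyEmb, relabelBox]; split_ifs <;> omega

theorem copyEmb_of_isInterior (hn : IsInterior k n) : copyEmb k j n = 12 + 4 * k * j + n := by
  unfold IsInterior at hn; simp only [copyEmb, relabelBox]; split_ifs <;> omega

theorem twelve_le_copyEmb (hn : IsInterior k n) : 12 ≤ copyEmb k j n := by
  rw [copyEmb_of_isInterior hn]; omega

theorem copyEmb_of_not_isInterior {m : ℕ} (hm : ¬IsInterior k m) (hlt : m < 4 * k) :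
    copyEmb k j m = copyFirst j ∨ copyEmb k j m = copyLast j := by
  unfold IsInterior at hm; simp only [copyEmb, relabelBox]; split_ifs <;>
    first | exact Or.inl rfl | exact Or.inr rfl | omega

theorem copyEmb_lt_twelve_of_not_isInterior {m : ℕ} (hj : j < 4) (hm : ¬IsInterior k m)
    (hlt : m < 4 * k) : copyEmb k j m < 12 ∧ copyEmb k j m % 2 = 0 := by
  have := endpointArc_copyFirst_copyLast hj
  unfold endpointArc at this
  rcases copyEmb_of_not_isInterior hm hlt (j := j) with h | h <;> rw [h] <;> omega

theorem copyEmb_mem_gadgetVerts (hj : j < 4) (hn : IsInterior k n) :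
    copyEmb k j n ∈ gadgetVerts k :=
  Or.inr ⟨j, hj, n, hn.1, hn.2.1, hn.2.2, copyEmb_of_isInterior hn⟩

theorem copyEmb_inj {j' n' : ℕ} (hj : j < 4) (hj' : j' < 4) (hn : IsInterior k n)
    (hn' : IsInterior k n') (h : copyEmb k j n = copyEmb k j' n') : j = j' ∧ n = n' := by
  rw [copyEmb_of_isInterior hn, copyEmb_of_isInterior hn'] at h
  unfold IsInterior at hn hn'
  interval_cases j <;> interval_cases j' <;> omega

theorem copyEmb_injOn {m m' : ℕ} (hj : j < 4) (hm : m < 4 * k) (hm' : m' < 4 * k)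
    (h : copyEmb k j m = copyEmb k j m') : m = m' := by
  by_cases h1 : IsInterior k m <;> by_cases h2 : IsInterior k m'
  · exact (copyEmb_inj hj hj h1 h2 h).2
  · have := twelve_le_copyEmb h1 (j := j)
    have := copyEmb_lt_twelve_of_not_isInterior hj h2 hm'
    omega
  · have := twelve_le_copyEmb h2 (j := j)
    have := copyEmb_lt_twelve_of_not_isInterior hj h1 hm
    omega
  · have := endpointArc_copyFirst_copyLast hj
    unfold IsInterior at h1 h2
    unfold endpointArc at this
    by_contra hne
    obtain ⟨rfl, rfl⟩ | ⟨rfl, rfl⟩ : m = 0 ∧ m' = 2 * k - 1 ∨ m = 2 * k - 1 ∧ m' = 0 := by omega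
    all_goals rw [copyEmb_zero, copyEmb_last (by omega)] at h; omega

theorem cycleAdj_of_odd (h : s(x, y) ∈ gadgetEdges k) (hx : x < 12) (hodd : x % 2 = 1) :
    cycleAdj x y := by
  rcases mem_gadgetEdges_iff.1 h with h | ⟨j, hj, a, b, hab, rfl, -⟩
  · exact h
  · by_cases ha : IsInterior k a
    · exact absurd (twelve_le_copyEmb (j := j) ha) (by omega)
    · have := copyEmb_lt_twelve_of_not_isInterior hj ha hab.lt.1
      omega

/-- The edges a matching can use at a cycle vertex once every box interior is matched
internally. -/
def coreAdj (x y : ℕ) : Prop := cycleAdj x y ∨ endpointArc x y ∨ endpointArc y x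

/-- The perfect matching `{x₁, w₁}`, `{y₁, z₁}`, `{x₂, w₂}`, `{y₂, z₂}`, `{a, b}` of the cycle
vertices other than `u` and `v`. -/
def coreMatchArc (x y : ℕ) : Prop :=
  x = 1 ∧ y = 2 ∨ x = 11 ∧ y = 10 ∨ x = 5 ∧ y = 4 ∨ x = 7 ∧ y = 8 ∨ x = 0 ∧ y = 6

theorem coreMatchArc.lt (h : coreMatchArc x y) : x < 12 ∧ y < 12 := by
  unfold coreMatchArc at h; omega

theorem exists_coreMatchArc (hx : x < 12) (h3 : x ≠ 3) (h9 : x ≠ 9) :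
    ∃ y, coreMatchArc x y ∨ coreMatchArc y x := by
  interval_cases x <;> simp_all [coreMatchArc]

def canonicalRel (k x y : ℕ) : Prop :=
  (coreMatchArc x y ∨ coreMatchArc y x) ∨
    ∃ j < 4, ∃ n, IsInterior k n ∧ x = copyEmb k j n ∧ y = copyEmb k j (partner k n)

theorem canonicalRel_iff_of_lt (hx : x < 12) :
    canonicalRel k x y ↔ coreMatchArc x y ∨ coreMatchArc y x := by
  refine ⟨?_, Or.inl⟩
  rintro (h | ⟨j, -, n, hn, rfl, -⟩)
  · exact h
  · exact absurd (twelve_le_copyEmb (j := j) hn) (by omega)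

theorem canonicalRel_copyEmb_iff (hj : j < 4) (hn : IsInterior k n) :
    canonicalRel k (copyEmb k j n) y ↔ y = copyEmb k j (partner k n) := by
  refine ⟨?_, fun h => Or.inr ⟨j, hj, n, hn, rfl, h⟩⟩
  rintro ((h | h) | ⟨j', hj', n', hn', hx, rfl⟩)
  · exact absurd h.lt.1 (by have := twelve_le_copyEmb hn (j := j); omega)
  · exact absurd h.lt.2 (by have := twelve_le_copyEmb hn (j := j); omega)
  · obtain ⟨rfl, rfl⟩ := copyEmb_inj hj hj' hn hn' hx
    rfl

/-- A matching of `H_k` with holes exactly at `u = 3` and `v = 9`, as a relation on the labels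
of the vertices. -/
structure IsNearPerfect (k : ℕ) (P : ℕ → ℕ → Prop) : Prop extends IsMatchingRel P where
  adj : ∀ {x y}, P x y → (SimpleGraph.fromEdgeSet (gadgetEdges k)).Adj x y
  mem : ∀ {x y}, P x y → x ∈ gadgetVerts k ∧ x ≠ 3 ∧ x ≠ 9
  exists_rel : ∀ {x}, x ∈ gadgetVerts k → x ≠ 3 → x ≠ 9 → ∃ y, P x y

theorem isNearPerfect_canonicalRel (k : ℕ) : IsNearPerfect k (canonicalRel k) where
  symm := by
    rintro x y ((h | h) | ⟨j, hj, n, hn, rfl, rfl⟩)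
    · exact Or.inl (Or.inr h)
    · exact Or.inl (Or.inl h)
    · exact Or.inr (
        ⟨j, hj, partner k n, isInterior_partner hn, rfl, by rw [partner_partner hn]⟩)
  uniq := by
    rintro x y z ((hy | hy) | ⟨j, hj, n, hn, rfl, rfl⟩) hz
    · rw [canonicalRel_iff_of_lt hy.lt.1] at hz
      unfold coreMatchArc at hy hz; omega
    · rw [canonicalRel_iff_of_lt hy.lt.2] at hz
      unfold coreMatchArc at hy hz; omega
    · exact ((canonicalRel_copyEmb_iff hj hn).1 hz).symm
  adj := by
    rintro x y ((h | h) | ⟨j, hj, n, hn, rfl, rfl⟩)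
    all_goals refine ⟨mem_gadgetEdges_iff.2 ?_, ?_⟩
    · exact Or.inl (by unfold coreMatchArc at h; unfold cycleAdj cycleArc; omega)
    · unfold coreMatchArc at h; omega
    · exact Or.inl (by unfold coreMatchArc at h; unfold cycleAdj cycleArc; omega)
    · unfold coreMatchArc at h; omega
    · exact Or.inr ⟨j, hj, n, partner k n, boxAdj_partner hn, rfl, rfl⟩
    · rw [copyEmb_of_isInterior hn, copyEmb_of_isInterior (isInterior_partner hn)]
      have := partner_ne_self hn
      omega
  mem := by
    rintro x y ((h | h) | ⟨j, hj, n, hn, rfl, rfl⟩)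
    · have := h.lt; unfold coreMatchArc at h; exact ⟨Or.inl this.1, by omega, by omega⟩
    · have := h.lt; unfold coreMatchArc at h; exact ⟨Or.inl this.2, by omega, by omega⟩
    · have := twelve_le_copyEmb hn (j := j)
      exact ⟨copyEmb_mem_gadgetVerts hj hn, by omega, by omega⟩
  exists_rel := by
    rintro x (hx | ⟨j, hj, n, hn0, hn, hn1, rfl⟩) h3 h9
    · obtain ⟨y, hy⟩ := exists_coreMatchArc hx h3 h9
      exact ⟨y, Or.inl hy⟩
    · have hn : IsInterior k n := ⟨hn0, hn, hn1⟩
      exact ⟨_, Or.inr ⟨j, hj, n, hn, (copyEmb_of_isInterior hn).symm, rfl⟩⟩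

def holes (k : ℕ) : Set (gadgetVerts k) := {⟨3, Or.inl (by norm_num)⟩, ⟨9, Or.inl (by norm_num)⟩}

theorem mem_univ_diff_holes {a : gadgetVerts k} : a ∈ Set.univ \ holes k ↔ a.1 ≠ 3 ∧ a.1 ≠ 9 := by
  simp [holes, Subtype.ext_iff]

def matchRel (M : (gadgetGraph k).Subgraph) (x y : ℕ) : Prop :=
  ∃ (hx : x ∈ gadgetVerts k) (hy : y ∈ gadgetVerts k), M.Adj ⟨x, hx⟩ ⟨y, hy⟩

theorem matchRel_iff {M : (gadgetGraph k).Subgraph} {a b : gadgetVerts k} :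
    matchRel M a b ↔ M.Adj a b :=
  ⟨fun ⟨_, _, h⟩ => h, fun h => ⟨a.2, b.2, h⟩⟩

theorem isNearPerfect_matchRel {M : (gadgetGraph k).Subgraph} (hM : M.IsMatching)
    (hV : M.verts = Set.univ \ holes k) : IsNearPerfect k (matchRel M) where
  symm := fun ⟨hx, hy, h⟩ => ⟨hy, hx, h.symm⟩
  uniq := fun ⟨_, _, h⟩ ⟨_, _, h'⟩ =>
    congrArg Subtype.val ((hM (M.edge_vert h)).unique h h')
  adj := fun ⟨_, _, h⟩ => M.adj_sub h
  mem := fun ⟨hx, _, h⟩ => ⟨hx, mem_univ_diff_holes.1 (hV ▸ M.edge_vert h)⟩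
  exists_rel {x} hx h3 h9 := by
    have hxM : (⟨x, hx⟩ : gadgetVerts k) ∈ M.verts := hV ▸ mem_univ_diff_holes.2 ⟨h3, h9⟩
    obtain ⟨y, hy, -⟩ := hM hxM
    exact ⟨y, hx, y.2, hy⟩

namespace IsNearPerfect

variable {P Q : ℕ → ℕ → Prop}

theorem attachedBox (hP : IsNearPerfect k P) (hj : j < 4) : AttachedBox k P (copyEmb k j) where
  toIsMatchingRel := hP.toIsMatchingRel
  exists_rel hn := by
    have := twelve_le_copyEmb hn (j := j)
    exact hP.exists_rel (copyEmb_mem_gadgetVerts hj hn) (by omega) (by omega)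
  rel_interior {n y} hn h := by
    have := twelve_le_copyEmb hn (j := j)
    rcases mem_gadgetEdges_iff.1 (hP.adj h).1 with hc | ⟨j', hj', a, b, hab, hx, rfl⟩
    · unfold cycleAdj cycleArc at hc; omega
    · by_cases ha : IsInterior k a
      · obtain ⟨rfl, rfl⟩ := copyEmb_inj hj hj' hn ha hx
        exact ⟨_, hab, rfl⟩
      · have := copyEmb_lt_twelve_of_not_isInterior hj' ha hab.lt.1
        omega
  injOn := copyEmb_injOn hj

theorem rel_copyEmb_partner (hP : IsNearPerfect k P) (hj : j < 4) (hn : IsInterior k n) :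
    P (copyEmb k j n) (copyEmb k j (partner k n)) := by
  obtain ⟨hlt, hodd, h3, h9⟩ := copyGuard_spec hj
  obtain ⟨y, hy⟩ := hP.exists_rel (Or.inl hlt) h3 h9
  have hk : 1 ≤ k := by unfold IsInterior at hn; omega
  refine (hP.attachedBox hj).rel_partner_of_guard (g := copyGuard j) (fun m hm h => ?_) ?_ hn
  · exact absurd (twelve_le_copyEmb (j := j) hm) (by omega)
  · rw [copyEmb_zero, copyEmb_last hk]
    rcases cycleAdj_copyGuard hj (cycleAdj_of_odd (hP.adj hy).1 hlt hodd) with rfl | rfl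
    exacts [Or.inl hy, Or.inr hy]

theorem coreAdj_of_rel (hP : IsNearPerfect k P) (hx : x < 12) (h : P x y) : coreAdj x y := by
  rcases mem_gadgetEdges_iff.1 (hP.adj h).1 with hc | ⟨j, hj, a, b, hab, rfl, rfl⟩
  · exact Or.inl hc
  have ha : ¬IsInterior k a := fun ha => absurd (twelve_le_copyEmb (j := j) ha) (by omega)
  -- an interior partner `copyEmb k j b` of `x` is already matched inside its copy
  have hb : ¬IsInterior k b := fun hb => by
    have := hP.uniq (hP.rel_copyEmb_partner hj hb) (hP.symm h)
    have := twelve_le_copyEmb (isInterior_partner hb) (j := j)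
    omega
  exact Or.inr (endpointArc_or_of_ne hj (copyEmb_of_not_isInterior ha hab.lt.1)
    (copyEmb_of_not_isInterior hb hab.lt.2) (hP.adj h).2)

theorem exists_coreAdj (hP : IsNearPerfect k P) (hx : x < 12 ∧ x ≠ 3 ∧ x ≠ 9) :
    ∃ y, P x y ∧ (y ≠ 3 ∧ y ≠ 9 ∧ coreAdj x y) := by
  obtain ⟨y, hy⟩ := hP.exists_rel (Or.inl hx.1) hx.2.1 hx.2.2
  exact ⟨y, hy, (hP.mem (hP.symm hy)).2.1, (hP.mem (hP.symm hy)).2.2, hP.coreAdj_of_rel hx.1 hy⟩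

theorem rel_of_core_nbrs (hP : IsNearPerfect k P) {g e f : ℕ} (hg : g < 12 ∧ g ≠ 3 ∧ g ≠ 9)
    (he : e < 12 ∧ e ≠ 3 ∧ e ≠ 9) (hne : e ≠ g)
    (hgN : ∀ y, y ≠ 3 ∧ y ≠ 9 ∧ coreAdj g y → y = e ∨ y = f)
    (heN : ∀ y, y ≠ 3 ∧ y ≠ 9 ∧ coreAdj e y → y = g ∨ y = f) : P g e :=
  hP.rel_of_shared_rival hne ((hP.exists_coreAdj hg).imp fun _ h => ⟨h.1, hgN _ h.2⟩)
    ((hP.exists_coreAdj he).imp fun _ h => ⟨h.1, heN _ h.2⟩)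

theorem rel_of_coreMatchArc (hP : IsNearPerfect k P)
    (h : coreMatchArc x y) : P x y := by
  have h12 : P 1 2 := hP.rel_of_core_nbrs (f := 0) (by decide) (by decide) (by decide) ?_ ?_
  have h1110 : P 11 10 := hP.rel_of_core_nbrs (f := 0) (by decide) (by decide) (by decide) ?_ ?_
  have h54 : P 5 4 := hP.rel_of_core_nbrs (f := 6) (by decide) (by decide) (by decide) ?_ ?_
  have h78 : P 7 8 := hP.rel_of_core_nbrs (f := 6) (by decide) (by decide) (by decide) ?_ ?_
  have h06 : P 0 6 := by
    obtain ⟨y, hy, hc⟩ := hP.exists_coreAdj (x := 0) (by decide)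
    obtain rfl | rfl | rfl | rfl | rfl : y = 1 ∨ y = 2 ∨ y = 11 ∨ y = 10 ∨ y = 6 := by
      simp only [coreAdj, cycleAdj, cycleArc, endpointArc] at hc; omega
    · exact absurd (hP.uniq (hP.symm hy) h12) (by decide)
    · exact absurd (hP.uniq (hP.symm hy) (hP.symm h12)) (by decide)
    · exact absurd (hP.uniq (hP.symm hy) h1110) (by decide)
    · exact absurd (hP.uniq (hP.symm hy) (hP.symm h1110)) (by decide)
    · exact hy
  · rcases h with ⟨rfl, rfl⟩ | ⟨rfl, rfl⟩ | ⟨rfl, rfl⟩ | ⟨rfl, rfl⟩ | ⟨rfl, rfl⟩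
    exacts [h12, h1110, h54, h78, h06]
  -- the neighbour lists left open by the four `rel_of_core_nbrs` above
  all_goals simp only [coreAdj, cycleAdj, cycleArc, endpointArc]; omega

theorem eq_of_le (hP : IsNearPerfect k P) (hQ : IsNearPerfect k Q) (hQP : Q ≤ P) : P = Q := by
  funext x y
  refine propext ⟨fun hxy => ?_, hQP x y⟩
  obtain ⟨hx, h3, h9⟩ := hP.mem hxy
  obtain ⟨z, hz⟩ := hQ.exists_rel hx h3 h9
  rwa [hP.uniq hxy (hQP x z hz)]

theorem eq_canonicalRel (hP : IsNearPerfect k P) : P = canonicalRel k := by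
  refine hP.eq_of_le (isNearPerfect_canonicalRel k) fun x y h => ?_
  rcases h with (h | h) | ⟨j, hj, n, hn, rfl, rfl⟩
  · exact hP.rel_of_coreMatchArc h
  · exact hP.symm (hP.rel_of_coreMatchArc h)
  · exact hP.rel_copyEmb_partner hj hn

def toSubgraph (hP : IsNearPerfect k P) : (gadgetGraph k).Subgraph where
  verts := Set.univ \ holes k
  Adj a b := P a b
  adj_sub h := hP.adj h
  edge_vert h := mem_univ_diff_holes.2 (hP.mem h).2
  symm := ⟨fun _ _ => hP.symm⟩

theorem isMatching_toSubgraph (hP : IsNearPerfect k P) : hP.toSubgraph.IsMatching := by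
  intro a ha
  obtain ⟨y, hy⟩ := hP.exists_rel a.2 (mem_univ_diff_holes.1 ha).1 (mem_univ_diff_holes.1 ha).2
  exact ⟨⟨y, (hP.mem (hP.symm hy)).1⟩, hy, fun b hb => Subtype.ext (hP.uniq hb hy)⟩

end IsNearPerfect

end TorpidGadget

open TorpidGadget in
/-- For every `k ≥ 1`, the torpid-mixing gadget `H_k` has exactly one matching
covering every vertex except `u` (vertex `3`) and `v` (vertex `9`), i.e.
`|N_{H_k}(u, v)| = 1`. -/
theorem gadgetGraph_npCount_u_v (k : ℕ) :
    npCount (gadgetGraph k)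
      ⟨3, Or.inl (by norm_num)⟩
      ⟨9, Or.inl (by norm_num)⟩ = 1 := by
  have hC := isNearPerfect_canonicalRel k
  rw [npCount, Nat.card_eq_one_iff_exists]
  refine ⟨⟨hC.toSubgraph, hC.isMatching_toSubgraph, rfl⟩, fun ⟨M, hM, hV⟩ => ?_⟩
  have hRel : matchRel M = canonicalRel k := (isNearPerfect_matchRel hM hV).eq_canonicalRel
  refine Subtype.ext (SimpleGraph.Subgraph.ext hV ?_)
  funext a b
  exact propext (matchRel_iff.symm.trans (by rw [hRel]; rfl))
end

section
/- For every k ≥ 1, letting N denote the unique matching in N_{H_k}(u, v), there is exactly one matching N' ∈ N_{H_k}(x_1, v) whose symmetric difference with N has size 2 (i.e., exactly one matching in N_{H_k}(x_1, v) from which N can be reached by removing one edge and adding one edge). -/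
/-! In a near-perfect matching with holes at `u` and `v`, the vertex `x₁` is matched to `w₁`:
otherwise it is matched to `a`, and then `w₁` together with the interior of the chain of boxes
joining `w₁` to `a` (an odd number `4k - 1` of vertices) would be matched within itself.
A single edge exchange moving the hole from `u` to `x₁` must remove `x₁w₁` and add an edge at `u`;
since `w₁` stays matched, that edge is `w₁u`. -/

lemma Set.symmDiff_sdiff_singleton_union {α : Type*} {A : Set α} {e f : α} (he : e ∈ A)
    (hf : f ∉ A) : symmDiff A (A \ {e} ∪ {f}) = {e, f} := by
  ext a
  by_cases hae : a = e <;> by_cases haf : a = f <;> simp_all [Set.mem_symmDiff]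

namespace SimpleGraph.Subgraph

variable {V : Type*} {G : SimpleGraph V} {M N : G.Subgraph}

lemma IsMatching.induce_of_adj_mem (hM : M.IsMatching) {s : Set V} (hs : s ⊆ M.verts)
    (hclosed : ∀ ⦃x y⦄, x ∈ s → M.Adj x y → y ∈ s) : (M.induce s).IsMatching := by
  intro x hx
  obtain ⟨y, hxy, huniq⟩ := hM (hs hx)
  exact ⟨y, ⟨hx, hclosed hx hxy, hxy⟩, fun z hz => huniq z hz.2.2⟩

lemma IsMatching.even_ncard_of_adj_mem (hM : M.IsMatching) {s : Set V} (hfin : s.Finite)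
    (hs : s ⊆ M.verts) (hclosed : ∀ ⦃x y⦄, x ∈ s → M.Adj x y → y ∈ s) : Even s.ncard := by
  have : Fintype (M.induce s).verts := hfin.fintype
  have h := (hM.induce_of_adj_mem hs hclosed).even_card
  rwa [Set.toFinset_card, ← Nat.card_eq_fintype_card, Nat.card_coe_set_eq, induce_verts] at h

lemma IsMatching.deleteVerts_pair (hM : M.IsMatching) {x w : V} (hxw : M.Adj x w) :
    (M.deleteVerts {x, w}).IsMatching := by
  refine hM.induce_of_adj_mem Set.sdiff_subset fun a b ha hab => ⟨M.edge_vert hab.symm, ?_⟩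
  rintro (rfl | rfl)
  · exact ha.2 (Or.inr (hM.eq_of_adj_left hab.symm hxw))
  · exact ha.2 (Or.inl (hM.eq_of_adj_left hab.symm hxw.symm))

lemma IsMatching.edgeSet_deleteVerts_pair (hM : M.IsMatching) {x w : V} (hxw : M.Adj x w) :
    (M.deleteVerts {x, w}).edgeSet = M.edgeSet \ {s(x, w)} := by
  ext e
  refine e.ind fun a b => ?_
  rw [Set.mem_sdiff, Subgraph.mem_edgeSet, Subgraph.mem_edgeSet, deleteVerts_adj]
  simp only [Set.mem_singleton_iff, Set.mem_insert_iff, Sym2.eq_iff]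
  constructor
  · rintro ⟨-, ha, -, hb, hab⟩
    exact ⟨hab, by tauto⟩
  · rintro ⟨hab, hne⟩
    have hb : b = w ↔ a = x := ⟨fun h => hM.eq_of_adj_right (h ▸ hab) hxw,
      fun h => hM.eq_of_adj_left (h ▸ hab) hxw⟩
    have ha : a = w ↔ b = x := ⟨fun h => hM.eq_of_adj_right (h ▸ hab.symm) hxw,
      fun h => hM.eq_of_adj_left (h ▸ hab.symm) hxw⟩
    exact ⟨M.edge_vert hab, by tauto, M.edge_vert hab.symm, by tauto, hab⟩

lemma IsMatching.exists_shift_hole (hN : N.IsMatching) {u v x w : V}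
    (hNv : N.verts = Set.univ \ {u, v}) (huv : u ≠ v) (hxw : N.Adj x w) (hwu : G.Adj w u) :
    ∃ M : G.Subgraph, M.IsMatching ∧ M.verts = Set.univ \ {x, v} ∧
      symmDiff N.edgeSet M.edgeSet = {s(x, w), s(w, u)} := by
  have hx : x ∈ N.verts := N.edge_vert hxw
  have hw : w ∈ N.verts := N.edge_vert hxw.symm
  simp only [hNv, Set.mem_sdiff, Set.mem_univ, Set.mem_insert_iff, Set.mem_singleton_iff,
    true_and, not_or] at hx hw
  have hxw_ne : x ≠ w := (N.adj_sub hxw).ne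
  refine ⟨N.deleteVerts {x, w} ⊔ G.subgraphOfAdj hwu, ?_, ?_, ?_⟩
  · refine (hN.deleteVerts_pair hxw).sup (.subgraphOfAdj hwu) ?_
    refine Set.disjoint_of_subset (support_subset_verts _) (support_subset_verts _) ?_
    rw [Set.disjoint_left]
    rintro a ⟨haN, ha⟩ (rfl | rfl)
    · exact ha (.inr rfl)
    · simp [hNv] at haN
  · ext a
    simp only [verts_sup, deleteVerts_verts, subgraphOfAdj_verts, hNv, Set.mem_union,
      Set.mem_sdiff, Set.mem_univ, Set.mem_insert_iff, Set.mem_singleton_iff, true_and]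
    grind
  · rw [edgeSet_sup, hN.edgeSet_deleteVerts_pair hxw, edgeSet_subgraphOfAdj]
    refine Set.symmDiff_sdiff_singleton_union (Subgraph.mem_edgeSet.2 hxw) fun h => ?_
    simpa [hNv] using N.edge_vert (Subgraph.mem_edgeSet.1 h).symm

lemma IsMatching.symmDiff_edgeSet_eq_of_shift_hole (hN : N.IsMatching) (hM : M.IsMatching)
    {u x w : V} (hxw : N.Adj x w) (huN : u ∉ N.verts) (hxM : x ∉ M.verts) (huM : u ∈ M.verts)
    (hwM : w ∈ M.verts) (hcard : (symmDiff N.edgeSet M.edgeSet).ncard = 2) :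
    symmDiff N.edgeSet M.edgeSet = {s(x, w), s(w, u)} := by
  have hwu : w ≠ u := fun h => huN (h ▸ N.edge_vert hxw.symm)
  obtain ⟨t, hut, -⟩ := hM huM
  have hxw_mem : s(x, w) ∈ symmDiff N.edgeSet M.edgeSet :=
    Or.inl ⟨hxw, fun h => hxM (M.edge_vert h)⟩
  have hut_mem : s(u, t) ∈ symmDiff N.edgeSet M.edgeSet :=
    Or.inr ⟨hut, fun h => huN (N.edge_vert h)⟩
  have hne : s(x, w) ≠ s(u, t) := by
    rw [Ne, Sym2.eq_iff]
    rintro (⟨rfl, -⟩ | ⟨-, rfl⟩)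
    exacts [huN (N.edge_vert hxw), hwu rfl]
  have hpair : symmDiff N.edgeSet M.edgeSet = {s(x, w), s(u, t)} :=
    (Set.eq_of_subset_of_ncard_le (Set.insert_subset hxw_mem (Set.singleton_subset_iff.2 hut_mem))
      (by rw [hcard, Set.ncard_pair hne]) (Set.finite_of_ncard_ne_zero (by omega))).symm
  obtain ⟨y, hwy, -⟩ := hM hwM
  have hwy_notMem : s(w, y) ∉ N.edgeSet := fun h =>
    hxM (hN.eq_of_adj_left h hxw.symm ▸ M.edge_vert hwy.symm)
  have hwy_mem : s(w, y) ∈ symmDiff N.edgeSet M.edgeSet := Or.inr ⟨hwy, hwy_notMem⟩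
  rw [hpair, Set.mem_insert_iff, Set.mem_singleton_iff] at hwy_mem
  obtain hwy_eq | hwy_eq := hwy_mem
  · exact absurd (hwy_eq ▸ hxw) hwy_notMem
  · obtain ⟨rfl, -⟩ | ⟨rfl, -⟩ := Sym2.eq_iff.1 hwy_eq
    · exact absurd rfl hwu
    · rw [hpair, Sym2.eq_swap (a := u)]

theorem IsMatching.existsUnique_shift_hole (hN : N.IsMatching) {u v x w : V}
    (hNv : N.verts = Set.univ \ {u, v}) (huv : u ≠ v) (hxw : N.Adj x w) (hwu : G.Adj w u) :
    ∃! M : G.Subgraph, (M.IsMatching ∧ M.verts = Set.univ \ {x, v}) ∧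
      (symmDiff N.edgeSet M.edgeSet).ncard = 2 := by
  have hx : x ∈ N.verts := N.edge_vert hxw
  have hw : w ∈ N.verts := N.edge_vert hxw.symm
  simp only [hNv, Set.mem_sdiff, Set.mem_univ, Set.mem_insert_iff, Set.mem_singleton_iff,
    true_and, not_or] at hx hw
  obtain ⟨M₀, hM₀, hM₀v, hM₀d⟩ := hN.exists_shift_hole hNv huv hxw hwu
  have hne : s(x, w) ≠ s(w, u) := by
    rw [Ne, Sym2.eq_iff]
    rintro (⟨rfl, -⟩ | ⟨rfl, -⟩)
    exacts [(N.adj_sub hxw).ne rfl, hx.1 rfl]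
  refine ⟨M₀, ⟨⟨hM₀, hM₀v⟩, by rw [hM₀d, Set.ncard_pair hne]⟩, ?_⟩
  rintro M ⟨⟨hM, hMv⟩, hcard⟩
  have hMd := hN.symmDiff_edgeSet_eq_of_shift_hole (u := u) hM hxw (by simp [hNv])
    (by simp [hMv]) (by simp [hMv, Ne.symm hx.1, huv])
    (by simp [hMv, Ne.symm (N.adj_sub hxw).ne, hw.2]) hcard
  exact IsMatching.injOn_edgeSet hM hM₀
    (symmDiff_right_injective N.edgeSet (hMd.trans hM₀d.symm))

end SimpleGraph.Subgraph

lemma mk_mem_gadgetEdges_of_lt_twelve {k i : ℕ} (hi : i < 12) :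
    s(i, (i + 1) % 12) ∈ gadgetEdges k :=
  Or.inl (Or.inl (Or.inl (Or.inl (Or.inl ⟨i, hi, rfl⟩))))

def boxCopyVerts (k e0 e1 base : ℕ) : Set ℕ :=
  {x | x = e0 ∨ x = e1 ∨ (base < x ∧ x < base + 4 * k ∧ x ≠ base + (2 * k - 1))}

lemma lt_of_mem_boxEdges_s5 {k n : ℕ} {e : Sym2 ℕ} (he : e ∈ boxEdges k) (hn : n ∈ e) :
    n < 4 * k := by
  rcases he with ((⟨j, hj, rfl⟩ | ⟨i, hi, rfl⟩) | ⟨i, hi, rfl⟩) | ⟨i, hi, rfl⟩ <;>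
    rcases Sym2.mem_iff.1 hn with rfl | rfl <;> omega

lemma relabelBox_mem_boxCopyVerts {k e0 e1 base n : ℕ} (hn : n < 4 * k) :
    relabelBox k e0 e1 base n ∈ boxCopyVerts k e0 e1 base := by
  simp only [relabelBox, boxCopyVerts, Set.mem_ofPred_eq]
  split_ifs <;> omega

lemma mem_boxCopyVerts_of_mem {k e0 e1 base x : ℕ} {e : Sym2 ℕ}
    (he : e ∈ Sym2.map (relabelBox k e0 e1 base) '' boxEdges k) (hx : x ∈ e) :
    x ∈ boxCopyVerts k e0 e1 base := by
  obtain ⟨e, he, rfl⟩ := he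
  obtain ⟨n, hn, rfl⟩ := Sym2.mem_map.1 hx
  exact relabelBox_mem_boxCopyVerts (lt_of_mem_boxEdges_s5 he hn)

lemma gadgetEdges_cases {k x y : ℕ} (h : s(x, y) ∈ gadgetEdges k) :
    (x < 12 ∧ y < 12 ∧ (y = (x + 1) % 12 ∨ x = (y + 1) % 12)) ∨
    (x = 0 ∧ y = 6 ∨ x = 6 ∧ y = 0) ∨
    (x ∈ boxCopyVerts k 2 0 12 ∧ y ∈ boxCopyVerts k 2 0 12) ∨
    (x ∈ boxCopyVerts k 0 10 (12 + 4 * k) ∧ y ∈ boxCopyVerts k 0 10 (12 + 4 * k)) ∨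
    (x ∈ boxCopyVerts k 4 6 (12 + 8 * k) ∧ y ∈ boxCopyVerts k 4 6 (12 + 8 * k)) ∨
    (x ∈ boxCopyVerts k 6 8 (12 + 12 * k) ∧ y ∈ boxCopyVerts k 6 8 (12 + 12 * k)) := by
  have hx := Sym2.mem_mk_left x y
  have hy := Sym2.mem_mk_right x y
  rcases h with ((((⟨i, hi, he⟩ | he) | he) | he) | he) | he
  · rcases Sym2.eq_iff.1 he with ⟨rfl, rfl⟩ | ⟨rfl, rfl⟩ <;> omega
  · rcases Sym2.eq_iff.1 he with ⟨rfl, rfl⟩ | ⟨rfl, rfl⟩ <;> simp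
  all_goals
    have hx' := mem_boxCopyVerts_of_mem he hx
    have hy' := mem_boxCopyVerts_of_mem he hy
    tauto

lemma eq_zero_or_eq_two_of_mk_one_mem_gadgetEdges {k y : ℕ} (h : s(1, y) ∈ gadgetEdges k) :
    y = 0 ∨ y = 2 := by
  have := gadgetEdges_cases h
  simp only [boxCopyVerts, Set.mem_ofPred_eq] at this
  omega

/-- The vertex `w₁` together with the internal vertices of the chain of boxes from `w₁` to `a`. -/
def wing (k : ℕ) : Finset ℕ :=
  insert 2 ((Finset.Ioo 12 (12 + 4 * k)).erase (12 + (2 * k - 1)))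

lemma mem_wing {k x : ℕ} :
    x ∈ wing k ↔ x = 2 ∨ (12 < x ∧ x < 12 + 4 * k ∧ x ≠ 12 + (2 * k - 1)) := by
  simp only [wing, Finset.mem_insert, Finset.mem_erase, Finset.mem_Ioo]
  tauto

lemma card_wing {k : ℕ} (hk : 1 ≤ k) : (wing k).card = 4 * k - 1 := by
  rw [wing, Finset.card_insert_of_notMem (by simp), Finset.card_erase_of_mem (by simp; omega),
    Nat.card_Ioo]
  omega

lemma coe_wing_subset_gadgetVerts (k : ℕ) : ↑(wing k) ⊆ gadgetVerts k := by
  intro x hx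
  rcases mem_wing.1 hx with rfl | hx
  · exact Or.inl (by norm_num)
  · exact Or.inr ⟨0, by norm_num, x - 12, by omega, by omega, by omega, by omega⟩

lemma mem_wing_or_of_mk_mem_gadgetEdges {k x y : ℕ} (hx : x ∈ wing k)
    (h : s(x, y) ∈ gadgetEdges k) :
    y ∈ wing k ∨ y = 0 ∨ y = 1 ∨ y = 3 := by
  have := gadgetEdges_cases h
  simp only [mem_wing, boxCopyVerts, Set.mem_ofPred_eq] at this hx ⊢
  omega

lemma gadgetGraph_adj {k : ℕ} {x y : gadgetVerts k} :
    (gadgetGraph k).Adj x y ↔ s(x.val, y.val) ∈ gadgetEdges k ∧ x.val ≠ y.val :=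
  SimpleGraph.fromEdgeSet_adj _

lemma gadgetGraph_adj_one_two_of_isMatching {k : ℕ} (hk : 1 ≤ k)
    {N : (gadgetGraph k).Subgraph} (hN : N.IsMatching)
    (hNv : N.verts = Set.univ \ {⟨3, Or.inl (by norm_num)⟩, ⟨9, Or.inl (by norm_num)⟩}) :
    N.Adj ⟨1, Or.inl (by norm_num)⟩ ⟨2, Or.inl (by norm_num)⟩ := by
  have hmem : ∀ x : gadgetVerts k, x ∈ N.verts ↔ x.val ≠ 3 ∧ x.val ≠ 9 := by
    simp [hNv, Subtype.ext_iff]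
  obtain ⟨p, h1p, -⟩ := hN ((hmem ⟨1, Or.inl (by norm_num)⟩).2 (by norm_num))
  obtain hp | hp :=
    eq_zero_or_eq_two_of_mk_one_mem_gadgetEdges (gadgetGraph_adj.1 (N.adj_sub h1p)).1
  swap
  · rwa [show p = ⟨2, Or.inl (by norm_num)⟩ from Subtype.ext hp] at h1p
  exfalso
  have hclosed : ∀ ⦃x y : gadgetVerts k⦄, x.val ∈ wing k → N.Adj x y → y.val ∈ wing k := by
    intro x y hx hxy
    rcases mem_wing_or_of_mk_mem_gadgetEdges hx (gadgetGraph_adj.1 (N.adj_sub hxy)).1 with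
      hy | hy | hy | hy
    · exact hy
    · have := hN.eq_of_adj_right hxy (Subtype.ext (hy.trans hp.symm) ▸ h1p)
      simp [this, mem_wing] at hx
    · have hy1 : y = ⟨1, Or.inl (by norm_num)⟩ := Subtype.ext hy
      have := hN.eq_of_adj_right hxy (hy1 ▸ h1p.symm)
      simp [this, hp, mem_wing] at hx
    · exact absurd hy ((hmem y).1 (N.edge_vert hxy.symm)).1
  have heven : Even (Subtype.val ⁻¹' (wing k : Set ℕ) : Set (gadgetVerts k)).ncard :=
    hN.even_ncard_of_adj_mem ((wing k).finite_toSet.preimage Subtype.val_injective.injOn)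
      (fun x hx => (hmem x).2 (by simp [mem_wing] at hx; omega)) hclosed
  rw [Set.ncard_preimage_of_injective_subset_range Subtype.val_injective
    (by simpa using coe_wing_subset_gadgetVerts k), Set.ncard_coe_finset, card_wing hk,
    Nat.even_iff] at heven
  omega

/-- For every `k ≥ 1` and for the (unique) matching `N` of the torpid-mixing gadget
`H_k` covering every vertex except `u` (vertex `3`) and `v` (vertex `9`), there is
exactly one matching `N' ∈ N_{H_k}(x₁, v)` (holes at vertex `1` and vertex `9`)
whose symmetric difference with `N` has size `2`, i.e. exactly one matching in
`N_{H_k}(x₁, v)` from which `N` can be reached by removing one edge and adding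
one edge. -/
theorem gadgetGraph_unique_transition (k : ℕ) (hk : 1 ≤ k)
    (N : (gadgetGraph k).Subgraph)
    (hN : N.IsMatching ∧
      N.verts = Set.univ \ {⟨3, Or.inl (by norm_num)⟩, ⟨9, Or.inl (by norm_num)⟩}) :
    ∃! N' : (gadgetGraph k).Subgraph,
      (N'.IsMatching ∧
        N'.verts = Set.univ \ {⟨1, Or.inl (by norm_num)⟩, ⟨9, Or.inl (by norm_num)⟩}) ∧
      (symmDiff N.edgeSet N'.edgeSet).ncard = 2 :=
  hN.1.existsUnique_shift_hole hN.2 (by simp [Subtype.ext_iff])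
    (gadgetGraph_adj_one_two_of_isMatching hk hN.1 hN.2)
    (gadgetGraph_adj.2 ⟨mk_mem_gadgetEdges_of_lt_twelve (i := 2) (by norm_num), by simp⟩)
end
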